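/- arXiv:1807.05416 — 5 statements merged into one kernel-verified Lean document; each statement's English description precedes it below -/
import Mathlib

section
/- Let k be a field, S = k[x_1,…,x_q] a polynomial ring, and λ an integral weight function on S. Let g_1,…,g_{m+n} be nonzero polynomials in S such that each g_i has a unique term of maximal λ-weight (so that its initial form in_λ(g_i) is a single term). Set I = (g_1,…,g_m) and J = (g_1,…,g_{m+n}), and assume these generating sets are Gröbner bases with respect to λ, i.e. in_λ(I) = (in_λ(g_1),…,in_λ(g_m)) and in_λ(J) = (in_λ(g_1),…,in_λ(g_{m+n})). Define the integral weight function λ̃ on the polynomial ring S[ε_1,…,ε_{m+n}] by λ̃(x_j) = λ(x_j) for each variable x_j of S and λ̃(ε_i) = λ(in_λ(g_i)). Then the λ̃-initial ideal of the blow-up presentation ideal satisfies in_{λ̃}( I·S[ε] + (ε_1,…,ε_m) + Syz({g_1,…,g_{m+n}}) ) = in_λ(I)·S[ε] + (ε_1,…,ε_m) + Syz({in_λ(g_1),…,in_λ(g_{m+n})}), where both syzygy ideals are taken with respect to the full list of m+n elements. (This says the blow-up algebra of S/I along J/I Gröbner-degenerates, via λ̃, to the blow-up algebra of S/in_λ(I)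 along in_λ(J)/in_λ(I).) -/
open MvPolynomial

noncomputable section

/-- The `λ`-weight of a monomial exponent vector: weights extend additively to monomials. -/
def monWeight {σ : Type*} (lam : σ → ℤ) (d : σ →₀ ℕ) : ℤ :=
  d.sum fun i m => (m : ℤ) * lam i

/-- The initial form `in_λ(f)`: the sum of the terms of `f` of maximal `λ`-weight. -/
def initialForm {σ K : Type*} [CommSemiring K] (lam : σ → ℤ) (f : MvPolynomial σ K) :
    MvPolynomial σ K :=
  ∑ d ∈ f.support.filter
      (fun d => ∀ e ∈ f.support, monWeight lam e ≤ monWeight lam d),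
    monomial d (coeff d f)

/-- The initial ideal `in_λ(I)`, generated by the initial forms of the nonzero elements. -/
def initialIdeal {σ K : Type*} [CommSemiring K] (lam : σ → ℤ) (I : Ideal (MvPolynomial σ K)) :
    Ideal (MvPolynomial σ K) :=
  Ideal.span {g | ∃ f ∈ I, f ≠ 0 ∧ g = initialForm lam f}

/-- The maximal `λ`-weight of a term of `f` (with junk value `0` for `f = 0`). -/
def maxWeight {σ K : Type*} [CommSemiring K] (lam : σ → ℤ) (f : MvPolynomial σ K) : ℤ :=
  WithBot.unbotD 0 (f.support.image (monWeight lam)).max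

/-- The syzygy ideal `Syz({g_i}) = (ε_1,…,ε_N) ∩ ker ev` in `S[ε_1,…,ε_N]`, where
`ev : S[ε_1,…,ε_N] → S` is the `S`-algebra map sending `ε_i` to `g_i`. -/
def syzygyIdeal {k : Type*} [CommRing k] {q N : ℕ} (g : Fin N → MvPolynomial (Fin q) k) :
    Ideal (MvPolynomial (Fin q ⊕ Fin N) k) :=
  Ideal.span (Set.range fun i : Fin N => (X (Sum.inr i) : MvPolynomial (Fin q ⊕ Fin N) k))
    ⊓ RingHom.ker (aeval (Sum.elim X g) :
        MvPolynomial (Fin q ⊕ Fin N) k →ₐ[k] MvPolynomial (Fin q) k)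

/-!
Write `η` and `ev_u` for the evaluations `S[ε] → S` sending `ε ↦ 0` and `ε ↦ u`. An element `F`
lies in `I·S[ε] + (ε_1,…,ε_m) + Syz(u)`, where `I = (u_1,…,u_m)`, exactly when `η F ∈ I` and
`ev_u F ∈ I`. For `λ̃`, the maps `η` and `ev_g` are filtered, and on top-weight components they
agree with the graded maps `η` and `ev_{in g}`; so the initial forms of the elements of the
left-hand ideal pass the membership test for the right-hand one.

Conversely, the right-hand ideal is generated by initial forms of elements of the left-hand one.
This is clear for `in_λ(I)` and the `ε_i`, and a `λ̃`-homogeneous syzygy `G` of the `in_λ(g_l)`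
lifts to the syzygy `G - ∑ c_l ε_l` of the `g_l`, where `ev_g G = ∑ c_l g_l` is a standard
representation of `ev_g G ∈ J`, which has lower weight than `G`. Standard representations exist
because the `g_l` form a Gröbner basis of `J`: homogenize with an extra variable `t` of weight
one; the Gröbner basis property gives `Ĵ ⊆ (ĝ_l) + t Ĵ`, every element of `Ĵ` has a multiple
`t ^ n F ∈ (ĝ_l)`, and Nakayama's lemma then gives `Ĵ = (ĝ_l)`.
-/

theorem Ideal.span_le_of_mem_sup_mul_of_pow_mul_mem {A : Type*} [CommRing A]
    [IsNoetherianRing A] {V : Ideal A} {s : Set A} {x : A}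
    (hsup : ∀ a ∈ s, a ∈ V ⊔ Ideal.span {x} * Ideal.span s)
    (hpow : ∀ a ∈ s, ∃ n : ℕ, x ^ n * a ∈ V) : Ideal.span s ≤ V := by
  set N : Submodule A (A ⧸ V) := Submodule.map V.mkQ (Ideal.span s)
  have hle : N ≤ Ideal.span {x} • N := by
    refine Submodule.map_le_iff_le_comap.2 (Ideal.span_le.2 fun a ha => ?_)
    obtain ⟨v, hv, y, hy, rfl⟩ := Submodule.mem_sup.1 (hsup a ha)
    rw [SetLike.mem_coe, Submodule.mem_comap, map_add, Submodule.mkQ_apply,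
      (Submodule.Quotient.mk_eq_zero V).2 hv, zero_add, ← Submodule.map_smul'']
    exact Submodule.mem_map_of_mem hy
  obtain ⟨r, hr, hrN⟩ := Submodule.exists_mem_and_smul_eq_self_of_fg_of_le_smul _ N
    ((IsNoetherian.noetherian _).map _) hle
  obtain ⟨c, rfl⟩ := Ideal.mem_span_singleton'.1 hr
  -- `c x` acts as the identity on the image of `span s`, whereas `x ^ n` kills the class of `a`
  refine Ideal.span_le.2 fun a ha => ?_
  obtain ⟨n, hn⟩ := hpow a ha
  have hself : ∀ k : ℕ, (c * x) ^ k • V.mkQ a = V.mkQ a := fun k => by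
    induction k with
    | zero => simp
    | succ k ih =>
      rw [pow_succ, mul_smul, hrN _ (Submodule.mem_map_of_mem (Ideal.subset_span ha)), ih]
  rw [SetLike.mem_coe, ← Submodule.Quotient.mk_eq_zero, ← Submodule.mkQ_apply, ← hself n,
    mul_pow, mul_smul, ← map_smul, smul_eq_mul, Submodule.mkQ_apply,
    (Submodule.Quotient.mk_eq_zero V).2 hn, smul_zero]

namespace MvPolynomial

section Filtration

variable {σ K : Type*} [CommRing K] {lam : σ → ℤ}

theorem monWeight_eq_weight (lam : σ → ℤ) (d : σ →₀ ℕ) :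
    monWeight lam d = Finsupp.weight lam d := by
  simp only [monWeight, Finsupp.weight_apply, nsmul_eq_mul]

variable (K) in
def weightLE (lam : σ → ℤ) (w : ℤ) : Submodule K (MvPolynomial σ K) :=
  restrictSupport K {d | Finsupp.weight lam d ≤ w}

theorem mem_weightLE {w : ℤ} {f : MvPolynomial σ K} :
    f ∈ weightLE K lam w ↔ ∀ d ∈ f.support, Finsupp.weight lam d ≤ w :=
  mem_restrictSupport_iff K

theorem weightLE_mono {w w' : ℤ} (h : w ≤ w') : weightLE K lam w ≤ weightLE K lam w' :=
  restrictSupport_mono K fun _ hd => le_trans hd h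

theorem mul_mem_weightLE {a b : ℤ} {f g : MvPolynomial σ K} (hf : f ∈ weightLE K lam a)
    (hg : g ∈ weightLE K lam b) : f * g ∈ weightLE K lam (a + b) := by
  classical
  rw [mem_weightLE] at *
  intro d hd
  obtain ⟨d₁, hd₁, d₂, hd₂, rfl⟩ := Finset.mem_add.1 (support_mul f g hd)
  rw [map_add]
  exact add_le_add (hf d₁ hd₁) (hg d₂ hd₂)

theorem IsWeightedHomogeneous.mem_weightLE {w : ℤ} {f : MvPolynomial σ K}
    (hf : IsWeightedHomogeneous lam f w) : f ∈ weightLE K lam w :=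
  MvPolynomial.mem_weightLE.2 fun _ hd => (hf (mem_support_iff.1 hd)).le

theorem weightedHomogeneousComponent_eq_zero_of_mem_weightLE {w w' : ℤ}
    {f : MvPolynomial σ K} (hf : f ∈ weightLE K lam w) (hw : w < w') :
    weightedHomogeneousComponent lam w' f = 0 :=
  weightedHomogeneousComponent_eq_zero' w' f fun d hd =>
    ((mem_weightLE.1 hf d hd).trans_lt hw).ne

theorem prod_mem_weightLE {ι : Type*} {s : Finset ι} {f : ι → MvPolynomial σ K}
    {n : ι → ℤ} (hf : ∀ i ∈ s, f i ∈ weightLE K lam (n i)) :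
    ∏ i ∈ s, f i ∈ weightLE K lam (∑ i ∈ s, n i) := by
  classical
  induction s using Finset.induction_on with
  | empty => exact (isWeightedHomogeneous_one K lam).mem_weightLE
  | insert a s ha ih =>
    rw [Finset.prod_insert ha, Finset.sum_insert ha]
    exact mul_mem_weightLE (hf a (s.mem_insert_self a))
      (ih fun i hi => hf i (Finset.mem_insert_of_mem hi))

theorem prod_sub_prod_mem_weightLE {ι : Type*} {s : Finset ι} {f g : ι → MvPolynomial σ K}
    {n : ι → ℤ} (hg : ∀ i ∈ s, g i ∈ weightLE K lam (n i))
    (hfg : ∀ i ∈ s, f i - g i ∈ weightLE K lam (n i - 1)) :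
    ∏ i ∈ s, f i - ∏ i ∈ s, g i ∈ weightLE K lam (∑ i ∈ s, n i - 1) := by
  classical
  have hf : ∀ i ∈ s, f i ∈ weightLE K lam (n i) := fun i hi => by
    simpa using add_mem (hg i hi) (weightLE_mono (by omega) (hfg i hi))
  induction s using Finset.induction_on with
  | empty => simp
  | insert a s ha ih =>
    have hs {P : ι → Prop} (h : ∀ i ∈ insert a s, P i) : ∀ i ∈ s, P i :=
      fun i hi => h i (Finset.mem_insert_of_mem hi)
    rw [Finset.prod_insert ha, Finset.prod_insert ha, Finset.sum_insert ha,
      show f a * ∏ i ∈ s, f i - g a * ∏ i ∈ s, g i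
        = (f a - g a) * ∏ i ∈ s, f i + g a * (∏ i ∈ s, f i - ∏ i ∈ s, g i) by ring]
    refine add_mem ?_ ?_
    · convert mul_mem_weightLE (hfg a (s.mem_insert_self a)) (prod_mem_weightLE (hs hf))
        using 2
      ring
    · convert mul_mem_weightLE (hg a (s.mem_insert_self a)) (ih (hs hg) (hs hfg) (hs hf))
        using 2
      ring

end Filtration

section InitialForm

variable {σ K : Type*} [CommRing K] {lam : σ → ℤ}

theorem weight_le_maxWeight {f : MvPolynomial σ K} {d : σ →₀ ℕ} (hd : d ∈ f.support) :
    Finsupp.weight lam d ≤ maxWeight lam f := by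
  classical
  rw [← monWeight_eq_weight]
  obtain ⟨b, hb⟩ := Finset.max_of_mem (Finset.mem_image_of_mem (monWeight lam) hd)
  have := Finset.le_max (Finset.mem_image_of_mem (monWeight lam) hd)
  rw [hb, WithBot.coe_le_coe] at this
  rwa [maxWeight, hb]

theorem mem_weightLE_maxWeight (f : MvPolynomial σ K) : f ∈ weightLE K lam (maxWeight lam f) :=
  mem_weightLE.2 fun _ hd => weight_le_maxWeight hd

theorem exists_weight_eq_maxWeight {f : MvPolynomial σ K} (hf : f ≠ 0) :
    ∃ d ∈ f.support, Finsupp.weight lam d = maxWeight lam f := by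
  classical
  obtain ⟨b, hb⟩ := Finset.max_of_nonempty ((support_nonempty.2 hf).image (monWeight lam))
  obtain ⟨d, hd, rfl⟩ := Finset.mem_image.1 (Finset.mem_of_max hb)
  exact ⟨d, hd, by rw [maxWeight, hb, ← monWeight_eq_weight]; rfl⟩

theorem maxWeight_le {f : MvPolynomial σ K} {w : ℤ} (hf : f ≠ 0)
    (h : f ∈ weightLE K lam w) : maxWeight lam f ≤ w := by
  obtain ⟨d, hd, hdw⟩ := exists_weight_eq_maxWeight (lam := lam) hf
  exact hdw ▸ mem_weightLE.1 h d hd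

theorem initialForm_eq_weightedHomogeneousComponent (f : MvPolynomial σ K) :
    initialForm lam f = weightedHomogeneousComponent lam (maxWeight lam f) f := by
  classical
  rw [initialForm, weightedHomogeneousComponent_apply]
  refine Finset.sum_congr (Finset.filter_congr fun d hd => ?_) fun _ _ => rfl
  simp_rw [monWeight_eq_weight]
  refine ⟨fun hmax => le_antisymm (weight_le_maxWeight hd) ?_, fun hdw e he => ?_⟩
  · obtain ⟨e, he, hew⟩ :=
      exists_weight_eq_maxWeight (lam := lam) (f := f) fun h => by simp [h] at hd
    exact hew ▸ hmax e he
  · exact hdw ▸ weight_le_maxWeight he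

theorem isWeightedHomogeneous_initialForm (f : MvPolynomial σ K) :
    IsWeightedHomogeneous lam (initialForm lam f) (maxWeight lam f) := by
  rw [initialForm_eq_weightedHomogeneousComponent]
  exact weightedHomogeneousComponent_isWeightedHomogeneous _ _

theorem sub_initialForm_mem_weightLE (f : MvPolynomial σ K) :
    f - initialForm lam f ∈ weightLE K lam (maxWeight lam f - 1) := by
  classical
  rw [mem_weightLE]
  intro d hd
  rw [initialForm_eq_weightedHomogeneousComponent, mem_support_iff, coeff_sub,
    coeff_weightedHomogeneousComponent] at hd
  have hle : Finsupp.weight lam d ≤ maxWeight lam f := by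
    refine weight_le_maxWeight (mem_support_iff.2 fun h => hd ?_)
    simp [h]
  have hne : Finsupp.weight lam d ≠ maxWeight lam f := fun h => by simp [h] at hd
  omega

theorem initialForm_ne_zero {f : MvPolynomial σ K} (hf : f ≠ 0) : initialForm lam f ≠ 0 := by
  intro h
  have := maxWeight_le hf (by simpa [h] using sub_initialForm_mem_weightLE (lam := lam) f)
  omega

theorem initialForm_add_of_mem_weightLE {w : ℤ} {H r : MvPolynomial σ K} (hH0 : H ≠ 0)
    (hH : IsWeightedHomogeneous lam H w) (hr : r ∈ weightLE K lam (w - 1)) :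
    initialForm lam (H + r) = H := by
  have hcomp : weightedHomogeneousComponent lam w (H + r) = H := by
    rw [map_add, hH.weightedHomogeneousComponent_same,
      weightedHomogeneousComponent_eq_zero_of_mem_weightLE hr (by omega), add_zero]
  have hne : H + r ≠ 0 := fun h => hH0 (by rw [← hcomp, h, map_zero])
  have hmax : maxWeight lam (H + r) = w := by
    refine le_antisymm (maxWeight_le hne (add_mem hH.mem_weightLE (weightLE_mono (by omega) hr)))
      ?_
    obtain ⟨d, hd⟩ := exists_coeff_ne_zero hH0
    have hdw := hH hd
    rw [← hcomp, coeff_weightedHomogeneousComponent, if_pos hdw] at hd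
    exact hdw ▸ weight_le_maxWeight (mem_support_iff.2 hd)
  rw [initialForm_eq_weightedHomogeneousComponent, hmax, hcomp]

theorem IsWeightedHomogeneous.initialForm_eq_self {w : ℤ} {f : MvPolynomial σ K} (hf0 : f ≠ 0)
    (hf : IsWeightedHomogeneous lam f w) : initialForm lam f = f := by
  simpa using initialForm_add_of_mem_weightLE hf0 hf (zero_mem (weightLE K lam (w - 1)))

theorem initialForm_mem_initialIdeal {I : Ideal (MvPolynomial σ K)} {f : MvPolynomial σ K}
    (hf : f ∈ I) : initialForm lam f ∈ initialIdeal lam I := by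
  by_cases hf0 : f = 0
  · simp [hf0, initialForm_eq_weightedHomogeneousComponent]
  · exact Ideal.subset_span ⟨f, hf, hf0, rfl⟩

theorem weightedHomogeneousComponent_mem_initialIdeal {I : Ideal (MvPolynomial σ K)} {w : ℤ}
    {f : MvPolynomial σ K} (hfI : f ∈ I) (hf : f ∈ weightLE K lam w) :
    weightedHomogeneousComponent lam w f ∈ initialIdeal lam I := by
  by_cases hf0 : f = 0
  · simp [hf0]
  obtain hw | hw := (maxWeight_le hf0 hf).eq_or_lt
  · exact hw ▸ initialForm_eq_weightedHomogeneousComponent (lam := lam) f ▸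
      initialForm_mem_initialIdeal hfI
  · rw [weightedHomogeneousComponent_eq_zero_of_mem_weightLE (mem_weightLE_maxWeight f) hw]
    exact zero_mem _

theorem initialIdeal_mono {I J : Ideal (MvPolynomial σ K)} (h : I ≤ J) :
    initialIdeal lam I ≤ initialIdeal lam J :=
  Ideal.span_mono fun _ ⟨f, hf, hf0, hg⟩ => ⟨f, h hf, hf0, hg⟩

end InitialForm

section Aeval

variable {σ τ K : Type*} [CommRing K] {mu : σ → ℤ} {nu : τ → ℤ}
  {u v : σ → MvPolynomial τ K}

theorem isWeightedHomogeneous_aeval_monomial (hu : ∀ i, IsWeightedHomogeneous nu (u i) (mu i))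
    (d : σ →₀ ℕ) (c : K) :
    IsWeightedHomogeneous nu (aeval u (monomial d c)) (Finsupp.weight mu d) := by
  rw [aeval_monomial, algebraMap_eq, Finsupp.prod, Finsupp.weight_apply, Finsupp.sum]
  exact (IsWeightedHomogeneous.prod _ _ _ fun i _ => (hu i).pow (d i)).C_mul c

theorem IsWeightedHomogeneous.aeval (hu : ∀ i, IsWeightedHomogeneous nu (u i) (mu i)) {w : ℤ}
    {f : MvPolynomial σ K} (hf : IsWeightedHomogeneous mu f w) :
    IsWeightedHomogeneous nu (MvPolynomial.aeval u f) w := by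
  induction hf using IsWeightedHomogeneous.induction_on with
  | zero => simpa using isWeightedHomogeneous_zero K nu w
  | add p q _ _ hp hq => simpa using hp.add hq
  | monomial d c hd => exact hd ▸ isWeightedHomogeneous_aeval_monomial hu d c

theorem weightedHomogeneousComponent_aeval (hu : ∀ i, IsWeightedHomogeneous nu (u i) (mu i))
    (w : ℤ) (f : MvPolynomial σ K) :
    weightedHomogeneousComponent nu w (aeval u f) =
      aeval u (weightedHomogeneousComponent mu w f) := by
  induction f using induction_on' with
  | monomial d c =>
    have h := isWeightedHomogeneous_aeval_monomial hu d c
    by_cases hw : Finsupp.weight mu d = w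
    · rw [hw] at h
      rw [h.weightedHomogeneousComponent_same,
        (isWeightedHomogeneous_monomial mu d c hw).weightedHomogeneousComponent_same]
    · rw [h.weightedHomogeneousComponent_ne w (Ne.symm hw),
        (isWeightedHomogeneous_monomial mu d c rfl).weightedHomogeneousComponent_ne w (Ne.symm hw),
        map_zero]
  | add p q hp hq => simp only [map_add, hp, hq]

theorem aeval_mem_weightLE_of_isWeightedHomogeneous
    (hu : ∀ i, IsWeightedHomogeneous nu (u i) (mu i)) {w : ℤ} {f : MvPolynomial σ K}
    (hf : f ∈ weightLE K mu w) : aeval u f ∈ weightLE K nu w := by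
  suffices weightLE K mu w ≤ (weightLE K nu w).comap (aeval u).toLinearMap from this hf
  rw [weightLE, restrictSupport_eq_span, Submodule.span_le]
  rintro _ ⟨d, hd, rfl⟩
  exact weightLE_mono hd (isWeightedHomogeneous_aeval_monomial hu d 1).mem_weightLE

theorem pow_sub_pow_mem_weightLE {f g : MvPolynomial τ K} {n : ℤ} (hg : g ∈ weightLE K nu n)
    (hfg : f - g ∈ weightLE K nu (n - 1)) (k : ℕ) :
    f ^ k - g ^ k ∈ weightLE K nu (k * n - 1) := by
  simpa using prod_sub_prod_mem_weightLE (s := Finset.range k) (f := fun _ => f) (g := fun _ => g)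
    (fun _ _ => hg) (fun _ _ => hfg)

theorem aeval_sub_aeval_mem_weightLE (hu : ∀ i, IsWeightedHomogeneous nu (u i) (mu i))
    (huv : ∀ i, v i - u i ∈ weightLE K nu (mu i - 1)) {w : ℤ} {f : MvPolynomial σ K}
    (hf : f ∈ weightLE K mu w) : aeval v f - aeval u f ∈ weightLE K nu (w - 1) := by
  suffices weightLE K mu w ≤
      (weightLE K nu (w - 1)).comap ((aeval v).toLinearMap - (aeval u).toLinearMap) from this hf
  rw [weightLE, restrictSupport_eq_span, Submodule.span_le]
  rintro _ ⟨d, hd, rfl⟩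
  simp only [SetLike.mem_coe, Submodule.mem_comap, LinearMap.sub_apply, AlgHom.toLinearMap_apply,
    aeval_monomial, map_one, one_mul, Finsupp.prod]
  refine weightLE_mono ?_ (prod_sub_prod_mem_weightLE (n := fun i => d i * mu i)
    (fun i _ => by simpa [nsmul_eq_mul] using ((hu i).pow (d i)).mem_weightLE)
    fun i _ => pow_sub_pow_mem_weightLE (hu i).mem_weightLE (huv i) (d i))
  simpa [Finsupp.weight_apply, Finsupp.sum] using hd

theorem aeval_mem_weightLE (hu : ∀ i, IsWeightedHomogeneous nu (u i) (mu i))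
    (huv : ∀ i, v i - u i ∈ weightLE K nu (mu i - 1)) {w : ℤ} {f : MvPolynomial σ K}
    (hf : f ∈ weightLE K mu w) : aeval v f ∈ weightLE K nu w := by
  simpa using add_mem (aeval_mem_weightLE_of_isWeightedHomogeneous hu hf)
    (weightLE_mono (by omega) (aeval_sub_aeval_mem_weightLE hu huv hf))

theorem weightedHomogeneousComponent_aeval_of_mem_weightLE
    (hu : ∀ i, IsWeightedHomogeneous nu (u i) (mu i))
    (huv : ∀ i, v i - u i ∈ weightLE K nu (mu i - 1)) {w : ℤ} {f : MvPolynomial σ K}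
    (hf : f ∈ weightLE K mu w) :
    weightedHomogeneousComponent nu w (aeval v f) =
      aeval u (weightedHomogeneousComponent mu w f) := by
  rw [← weightedHomogeneousComponent_aeval hu, ← sub_eq_zero, ← map_sub]
  exact weightedHomogeneousComponent_eq_zero_of_mem_weightLE
    (aeval_sub_aeval_mem_weightLE hu huv hf) (by omega)

end Aeval

section Rename

variable {σ τ K : Type*} [CommRing K] {lam : σ → ℤ}

theorem IsWeightedHomogeneous.rename {lam' : τ → ℤ} {e : σ → τ}
    (hw : ∀ i, lam' (e i) = lam i) {w : ℤ} {f : MvPolynomial σ K}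
    (hf : IsWeightedHomogeneous lam f w) :
    IsWeightedHomogeneous lam' (rename e f) w := by
  rw [rename_eq_aeval]
  exact hf.aeval fun i => by simpa [hw] using isWeightedHomogeneous_X K lam' (e i)

theorem rename_mem_weightLE {lam' : τ → ℤ} {e : σ → τ} (hw : ∀ i, lam' (e i) = lam i)
    {w : ℤ} {f : MvPolynomial σ K} (hf : f ∈ weightLE K lam w) :
    rename e f ∈ weightLE K lam' w := by
  rw [rename_eq_aeval]
  exact aeval_mem_weightLE_of_isWeightedHomogeneous
    (fun i => by simpa [hw] using isWeightedHomogeneous_X K lam' (e i)) hf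

theorem initialForm_rename {lam' : τ → ℤ} {e : σ → τ} (he : Function.Injective e)
    (hw : ∀ i, lam' (e i) = lam i) (f : MvPolynomial σ K) :
    initialForm lam' (rename e f) = rename e (initialForm lam f) := by
  by_cases hf : f = 0
  · simp [hf, initialForm_eq_weightedHomogeneousComponent]
  rw [show rename e f = rename e (initialForm lam f) + rename e (f - initialForm lam f) by
    rw [← map_add, add_sub_cancel]]
  exact initialForm_add_of_mem_weightLE
    ((map_ne_zero_iff _ (rename_injective e he)).2 (initialForm_ne_zero hf))
    ((isWeightedHomogeneous_initialForm f).rename hw)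
    (rename_mem_weightLE hw (sub_initialForm_mem_weightLE f))

theorem map_rename_initialIdeal_le {lam' : τ → ℤ} {e : σ → τ} (he : Function.Injective e)
    (hw : ∀ i, lam' (e i) = lam i) (I : Ideal (MvPolynomial σ K)) :
    Ideal.map (rename e) (initialIdeal lam I) ≤ initialIdeal lam' (Ideal.map (rename e) I) := by
  rw [initialIdeal, Ideal.map_span, Ideal.span_le]
  rintro _ ⟨_, ⟨f, hf, -, rfl⟩, rfl⟩
  rw [← initialForm_rename he hw]
  exact initialForm_mem_initialIdeal (Ideal.mem_map_of_mem _ hf)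

theorem IsWeightedHomogeneous.mem_initialIdeal {I : Ideal (MvPolynomial σ K)} {w : ℤ}
    {f : MvPolynomial σ K} (hf : IsWeightedHomogeneous lam f w) (hfI : f ∈ I) :
    f ∈ initialIdeal lam I := by
  by_cases hf0 : f = 0
  · simp [hf0]
  · exact hf.initialForm_eq_self hf0 ▸ initialForm_mem_initialIdeal hfI

end Rename

section GradedSpan

variable {σ K ι : Type*} [CommRing K] {lam : σ → ℤ}

attribute [local instance] weightedGradedAlgebra in
theorem weightedHomogeneousComponent_mul_of_isWeightedHomogeneous {b : ℤ}
    {H : MvPolynomial σ K} (hH : IsWeightedHomogeneous lam H b) (w : ℤ) (f : MvPolynomial σ K) :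
    weightedHomogeneousComponent lam w (f * H) =
      weightedHomogeneousComponent lam (w - b) f * H := by
  have e (φ : MvPolynomial σ K) (m : ℤ) :
      (DirectSum.decompose (weightedHomogeneousSubmodule K lam) φ m : MvPolynomial σ K) =
        weightedHomogeneousComponent lam m φ :=
    decompose'_apply K lam φ m
  have := DirectSum.coe_decompose_mul_add_of_right_mem
    (𝒜 := weightedHomogeneousSubmodule K lam) (a := f) (i := w - b) hH
  rwa [e, e, sub_add_cancel] at this

theorem exists_isWeightedHomogeneous_coeffs_of_mem_span [Fintype ι] {f : ι → MvPolynomial σ K}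
    {μ : ι → ℤ} (hf : ∀ l, IsWeightedHomogeneous lam (f l) (μ l)) {w : ℤ}
    {G : MvPolynomial σ K} (hG : IsWeightedHomogeneous lam G w)
    (hmem : G ∈ Ideal.span (Set.range f)) :
    ∃ c : ι → MvPolynomial σ K,
      G = ∑ l, c l * f l ∧ ∀ l, IsWeightedHomogeneous lam (c l) (w - μ l) := by
  obtain ⟨c, rfl⟩ := (Submodule.mem_span_range_iff_exists_fun _).1 hmem
  refine ⟨fun l => weightedHomogeneousComponent lam (w - μ l) (c l), ?_,
    fun l => weightedHomogeneousComponent_isWeightedHomogeneous _ _⟩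
  rw [← hG.weightedHomogeneousComponent_same, map_sum]
  exact Finset.sum_congr rfl fun l _ =>
    weightedHomogeneousComponent_mul_of_isWeightedHomogeneous (hf l) w (c l)

end GradedSpan

section Homogenization

variable {σ K : Type*} [CommRing K] {lam : σ → ℤ}

/-- Homogeneity in `(MvPolynomial σ K)[t]` for the grading extending `lam` by `t ↦ 1`. -/
def IsTHomogeneous (lam : σ → ℤ) (F : Polynomial (MvPolynomial σ K)) (w : ℤ) : Prop :=
  ∀ a : ℕ, IsWeightedHomogeneous lam (F.coeff a) (w - a)

theorem IsTHomogeneous.sum {ι : Type*} {s : Finset ι} {F : ι → Polynomial (MvPolynomial σ K)}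
    {w : ℤ} (hF : ∀ i ∈ s, IsTHomogeneous lam (F i) w) :
    IsTHomogeneous lam (∑ i ∈ s, F i) w :=
  fun a => by
    rw [Polynomial.finsetSum_coeff]
    exact IsWeightedHomogeneous.sum _ _ _ fun i hi => hF i hi a

theorem IsTHomogeneous.add {F G : Polynomial (MvPolynomial σ K)} {w : ℤ}
    (hF : IsTHomogeneous lam F w) (hG : IsTHomogeneous lam G w) : IsTHomogeneous lam (F + G) w :=
  fun a => by simpa using (hF a).add (hG a)

theorem IsTHomogeneous.mul {F G : Polynomial (MvPolynomial σ K)} {b c : ℤ}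
    (hF : IsTHomogeneous lam F b) (hG : IsTHomogeneous lam G c) :
    IsTHomogeneous lam (F * G) (b + c) := fun n => by
  rw [Polynomial.coeff_mul]
  refine IsWeightedHomogeneous.sum _ _ _ fun p hp => ?_
  have hpn : (p.1 : ℤ) + p.2 = n := by exact_mod_cast Finset.HasAntidiagonal.mem_antidiagonal.1 hp
  convert (hF p.1).mul (hG p.2) using 1
  omega

theorem isTHomogeneous_C {s : MvPolynomial σ K} {w : ℤ} (hs : IsWeightedHomogeneous lam s w) :
    IsTHomogeneous lam (Polynomial.C s) w := fun a => by
  rw [Polynomial.coeff_C]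
  split_ifs with ha
  · simpa [ha] using hs
  · exact isWeightedHomogeneous_zero K lam _

theorem isTHomogeneous_X_pow (n : ℕ) :
    IsTHomogeneous lam (Polynomial.X ^ n : Polynomial (MvPolynomial σ K)) n := fun a => by
  rw [Polynomial.coeff_X_pow]
  split_ifs with ha
  · simpa [ha] using isWeightedHomogeneous_one K lam
  · exact isWeightedHomogeneous_zero K lam _

theorem eval_one_eq_sum_coeff (F : Polynomial (MvPolynomial σ K)) :
    F.eval 1 = ∑ a ∈ F.support, F.coeff a := by
  simp [Polynomial.eval_eq_sum, Polynomial.sum_def]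

theorem IsTHomogeneous.coeff_eq {F : Polynomial (MvPolynomial σ K)} {w : ℤ}
    (hF : IsTHomogeneous lam F w) (a : ℕ) :
    F.coeff a = weightedHomogeneousComponent lam (w - a) (F.eval 1) := by
  rw [eval_one_eq_sum_coeff, map_sum, Finset.sum_eq_single a]
  · exact ((hF a).weightedHomogeneousComponent_same).symm
  · intro b _ hba
    exact (hF b).weightedHomogeneousComponent_ne _ (by omega)
  · intro ha
    rw [Polynomial.notMem_support_iff.1 ha, map_zero]

theorem IsTHomogeneous.eq_of_eval_one_eq {F G : Polynomial (MvPolynomial σ K)} {w : ℤ}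
    (hF : IsTHomogeneous lam F w) (hG : IsTHomogeneous lam G w) (h : F.eval 1 = G.eval 1) :
    F = G :=
  Polynomial.ext fun a => by rw [hF.coeff_eq, hG.coeff_eq, h]

theorem IsTHomogeneous.eval_one_mem_weightLE {F : Polynomial (MvPolynomial σ K)} {w : ℤ}
    (hF : IsTHomogeneous lam F w) : F.eval 1 ∈ weightLE K lam w := by
  rw [eval_one_eq_sum_coeff]
  exact Submodule.sum_mem _ fun a _ => weightLE_mono (by omega) (hF a).mem_weightLE

/-- The exponent of `t` is truncated at `0`, so this is a homogenization only for
`P ∈ weightLE K lam w`. -/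
def homogenize (lam : σ → ℤ) (w : ℤ) (P : MvPolynomial σ K) :
    Polynomial (MvPolynomial σ K) :=
  ∑ d ∈ P.support, Polynomial.C (monomial d (coeff d P)) *
    Polynomial.X ^ (w - Finsupp.weight lam d).toNat

theorem isTHomogeneous_homogenize {w : ℤ} {P : MvPolynomial σ K} (hP : P ∈ weightLE K lam w) :
    IsTHomogeneous lam (homogenize lam w P) w := by
  refine IsTHomogeneous.sum fun d hd => ?_
  convert (isTHomogeneous_C (isWeightedHomogeneous_monomial lam d (coeff d P) rfl)).mul
    (isTHomogeneous_X_pow (w - Finsupp.weight lam d).toNat) using 1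
  have := mem_weightLE.1 hP d hd
  omega

theorem eval_one_homogenize (w : ℤ) (P : MvPolynomial σ K) :
    (homogenize lam w P).eval 1 = P := by
  simp [homogenize, Polynomial.eval_finsetSum, support_sum_monomial_coeff]

theorem X_pow_mul_homogenize {w : ℤ} {P : MvPolynomial σ K} (hP : P ∈ weightLE K lam w)
    (n : ℕ) : Polynomial.X ^ n * homogenize lam w P = homogenize lam (w + n) P := by
  refine IsTHomogeneous.eq_of_eval_one_eq ?_
    (isTHomogeneous_homogenize (weightLE_mono (by omega) hP)) (by simp [eval_one_homogenize])
  rw [add_comm]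
  exact (isTHomogeneous_X_pow n).mul (isTHomogeneous_homogenize hP)

end Homogenization

section TComponent

variable {σ K ι : Type*} [CommRing K] {lam : σ → ℤ}

def tComponent (lam : σ → ℤ) (w : ℤ) :
    Polynomial (MvPolynomial σ K) →+ Polynomial (MvPolynomial σ K) where
  toFun F := F.sum fun a c => Polynomial.monomial a (weightedHomogeneousComponent lam (w - a) c)
  map_zero' := Polynomial.sum_zero_index _
  map_add' F G := Polynomial.sum_add_index _ _ _ (fun _ => by simp) fun _ _ _ => by simp

theorem coeff_tComponent (w : ℤ) (F : Polynomial (MvPolynomial σ K)) (a : ℕ) :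
    (tComponent lam w F).coeff a = weightedHomogeneousComponent lam (w - a) (F.coeff a) := by
  simp only [tComponent, AddMonoidHom.coe_mk, ZeroHom.coe_mk, Polynomial.sum_def,
    Polynomial.finsetSum_coeff, Polynomial.coeff_monomial]
  rw [Finset.sum_ite_eq']
  split_ifs with ha
  · rfl
  · rw [Polynomial.notMem_support_iff.1 ha, map_zero]

theorem isTHomogeneous_tComponent (w : ℤ) (F : Polynomial (MvPolynomial σ K)) :
    IsTHomogeneous lam (tComponent lam w F) w := fun a => by
  rw [coeff_tComponent]
  exact weightedHomogeneousComponent_isWeightedHomogeneous _ _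

theorem IsTHomogeneous.tComponent_eq_self {F : Polynomial (MvPolynomial σ K)} {w : ℤ}
    (hF : IsTHomogeneous lam F w) : tComponent lam w F = F :=
  Polynomial.ext fun a => by rw [coeff_tComponent, (hF a).weightedHomogeneousComponent_same]

theorem tComponent_mul_of_isTHomogeneous {H : Polynomial (MvPolynomial σ K)} {b : ℤ}
    (hH : IsTHomogeneous lam H b) (w : ℤ) (Q : Polynomial (MvPolynomial σ K)) :
    tComponent lam w (Q * H) = tComponent lam (w - b) Q * H := by
  ext1 n
  rw [coeff_tComponent, Polynomial.coeff_mul, Polynomial.coeff_mul, map_sum]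
  refine Finset.sum_congr rfl fun p hp => ?_
  have hpn : (p.1 : ℤ) + p.2 = n := by
    exact_mod_cast Finset.HasAntidiagonal.mem_antidiagonal.1 hp
  rw [weightedHomogeneousComponent_mul_of_isWeightedHomogeneous (hH p.2), coeff_tComponent]
  congr 3
  omega

theorem exists_isTHomogeneous_coeffs_of_mem_span [Fintype ι]
    {F : ι → Polynomial (MvPolynomial σ K)} {μ : ι → ℤ}
    (hF : ∀ l, IsTHomogeneous lam (F l) (μ l)) {w : ℤ} {G : Polynomial (MvPolynomial σ K)}
    (hG : IsTHomogeneous lam G w)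
    (hmem : G ∈ Ideal.span (Set.range F)) :
    ∃ c : ι → Polynomial (MvPolynomial σ K),
      G = ∑ l, c l * F l ∧ ∀ l, IsTHomogeneous lam (c l) (w - μ l) := by
  obtain ⟨c, rfl⟩ := (Submodule.mem_span_range_iff_exists_fun _).1 hmem
  refine ⟨fun l => tComponent lam (w - μ l) (c l), ?_, fun l => isTHomogeneous_tComponent _ _⟩
  rw [← hG.tComponent_eq_self, map_sum]
  exact Finset.sum_congr rfl fun l _ => tComponent_mul_of_isTHomogeneous (hF l) w (c l)

end TComponent

section StandardRepresentation

variable {σ K ι : Type*} [CommRing K] {lam : σ → ℤ} [Fintype ι]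
  {g : ι → MvPolynomial σ K}

def homogenizedIdeal (lam : σ → ℤ) (J : Ideal (MvPolynomial σ K)) :
    Ideal (Polynomial (MvPolynomial σ K)) :=
  Ideal.span {F | ∃ w P, P ∈ J ∧ P ∈ weightLE K lam w ∧ homogenize lam w P = F}

theorem homogenize_mem_homogenizedIdeal {J : Ideal (MvPolynomial σ K)} {w : ℤ}
    {P : MvPolynomial σ K} (hPJ : P ∈ J) (hP : P ∈ weightLE K lam w) :
    homogenize lam w P ∈ homogenizedIdeal lam J :=
  Ideal.subset_span ⟨w, P, hPJ, hP, rfl⟩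

theorem isTHomogeneous_homogenize_maxWeight (P : MvPolynomial σ K) :
    IsTHomogeneous lam (homogenize lam (maxWeight lam P) P) (maxWeight lam P) :=
  isTHomogeneous_homogenize (mem_weightLE_maxWeight P)

theorem exists_sub_sum_mul_mem_weightLE
    (hGB : initialIdeal lam (Ideal.span (Set.range g)) =
      Ideal.span (Set.range fun l => initialForm lam (g l)))
    {w : ℤ} {P : MvPolynomial σ K} (hPJ : P ∈ Ideal.span (Set.range g))
    (hP : P ∈ weightLE K lam w) :
    ∃ c : ι → MvPolynomial σ K,
      (∀ l, IsWeightedHomogeneous lam (c l) (w - maxWeight lam (g l))) ∧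
        P - ∑ l, c l * g l ∈ weightLE K lam (w - 1) := by
  by_cases hlow : P ∈ weightLE K lam (w - 1)
  · exact ⟨0, fun _ => isWeightedHomogeneous_zero K lam _, by simpa using hlow⟩
  have hP0 : P ≠ 0 := fun h => hlow (h ▸ zero_mem _)
  have hmax : maxWeight lam P = w := by
    refine (maxWeight_le hP0 hP).antisymm (not_lt.1 fun hlt => hlow ?_)
    exact weightLE_mono (by omega) (mem_weightLE_maxWeight P)
  obtain ⟨c, hc, hcw⟩ := exists_isWeightedHomogeneous_coeffs_of_mem_span
    (fun l => isWeightedHomogeneous_initialForm (g l))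
    (hmax ▸ isWeightedHomogeneous_initialForm P)
    (hGB ▸ initialForm_mem_initialIdeal hPJ)
  refine ⟨c, hcw, ?_⟩
  have : P - ∑ l, c l * g l =
      (P - initialForm lam P) - ∑ l, c l * (g l - initialForm lam (g l)) := by
    simp only [mul_sub, Finset.sum_sub_distrib, ← hc]
    ring
  rw [this]
  refine sub_mem (hmax ▸ sub_initialForm_mem_weightLE P) (Submodule.sum_mem _ fun l _ => ?_)
  convert mul_mem_weightLE (hcw l).mem_weightLE (sub_initialForm_mem_weightLE (g l)) using 2
  ring

theorem homogenize_mem_sup_X_mul_homogenizedIdeal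
    (hGB : initialIdeal lam (Ideal.span (Set.range g)) =
      Ideal.span (Set.range fun l => initialForm lam (g l)))
    {w : ℤ} {P : MvPolynomial σ K} (hPJ : P ∈ Ideal.span (Set.range g))
    (hP : P ∈ weightLE K lam w) :
    homogenize lam w P ∈
      Ideal.span (Set.range fun l => homogenize lam (maxWeight lam (g l)) (g l)) ⊔
        Ideal.span {Polynomial.X} * homogenizedIdeal lam (Ideal.span (Set.range g)) := by
  obtain ⟨c, hcw, hP'⟩ := exists_sub_sum_mul_mem_weightLE hGB hPJ hP
  set P' := P - ∑ l, c l * g l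
  have hP'J : P' ∈ Ideal.span (Set.range g) :=
    sub_mem hPJ (Ideal.sum_mem _ fun l _ => Ideal.mul_mem_left _ _ (Ideal.subset_span ⟨l, rfl⟩))
  have hsplit : homogenize lam w P =
      ∑ l, Polynomial.C (c l) * homogenize lam (maxWeight lam (g l)) (g l)
        + Polynomial.X * homogenize lam (w - 1) P' := by
    refine (isTHomogeneous_homogenize hP).eq_of_eval_one_eq
      ((IsTHomogeneous.sum fun l _ => ?_).add ?_) ?_
    · simpa using (isTHomogeneous_C (hcw l)).mul (isTHomogeneous_homogenize_maxWeight (g l))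
    · simpa [add_comm] using (isTHomogeneous_X_pow 1).mul (isTHomogeneous_homogenize hP')
    · simp [Polynomial.eval_finsetSum, eval_one_homogenize, P']
  rw [hsplit]
  exact add_mem (Ideal.mem_sup_left (Ideal.sum_mem _ fun l _ =>
      Ideal.mul_mem_left _ _ (Ideal.subset_span ⟨l, rfl⟩)))
    (Ideal.mem_sup_right (Ideal.mul_mem_mul (Ideal.mem_span_singleton_self _)
      (homogenize_mem_homogenizedIdeal hP'J hP')))

theorem exists_X_pow_mul_homogenize_mem_span {w : ℤ} {P : MvPolynomial σ K}
    (hPJ : P ∈ Ideal.span (Set.range g)) (hP : P ∈ weightLE K lam w) :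
    ∃ n : ℕ, Polynomial.X ^ n * homogenize lam w P ∈
      Ideal.span (Set.range fun l => homogenize lam (maxWeight lam (g l)) (g l)) := by
  obtain ⟨h, hh⟩ := (Submodule.mem_span_range_iff_exists_fun _).1 hPJ
  set n := Finset.univ.sup fun l => (maxWeight lam (h l) + maxWeight lam (g l) - w).toNat
  have hhn (l : ι) : h l ∈ weightLE K lam (w + n - maxWeight lam (g l)) := by
    have h1 : (maxWeight lam (h l) + maxWeight lam (g l) - w).toNat ≤ n :=
      Finset.le_sup (f := fun l => (maxWeight lam (h l) + maxWeight lam (g l) - w).toNat)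
        (Finset.mem_univ l)
    refine weightLE_mono ?_ (mem_weightLE_maxWeight (h l))
    omega
  refine ⟨n, ?_⟩
  rw [X_pow_mul_homogenize hP]
  have : homogenize lam (w + n) P =
      ∑ l, homogenize lam (w + n - maxWeight lam (g l)) (h l) *
        homogenize lam (maxWeight lam (g l)) (g l) := by
    refine (isTHomogeneous_homogenize (weightLE_mono (by omega) hP)).eq_of_eval_one_eq
      (IsTHomogeneous.sum fun l _ => ?_) ?_
    · simpa using
        (isTHomogeneous_homogenize (hhn l)).mul (isTHomogeneous_homogenize_maxWeight (g l))
    · simp [Polynomial.eval_finsetSum, eval_one_homogenize, ← hh]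
  rw [this]
  exact Ideal.sum_mem _ fun l _ => Ideal.mul_mem_left _ _ (Ideal.subset_span ⟨l, rfl⟩)

variable [Finite σ] [IsNoetherianRing K]

theorem homogenize_mem_span_homogenize
    (hGB : initialIdeal lam (Ideal.span (Set.range g)) =
      Ideal.span (Set.range fun l => initialForm lam (g l)))
    {w : ℤ} {P : MvPolynomial σ K} (hPJ : P ∈ Ideal.span (Set.range g))
    (hP : P ∈ weightLE K lam w) :
    homogenize lam w P ∈
      Ideal.span (Set.range fun l => homogenize lam (maxWeight lam (g l)) (g l)) := by
  refine Ideal.span_le_of_mem_sup_mul_of_pow_mul_mem (x := Polynomial.X) ?_ ?_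
    (homogenize_mem_homogenizedIdeal hPJ hP)
  · rintro _ ⟨w, P, hPJ, hP, rfl⟩
    exact homogenize_mem_sup_X_mul_homogenizedIdeal hGB hPJ hP
  · rintro _ ⟨w, P, hPJ, hP, rfl⟩
    exact exists_X_pow_mul_homogenize_mem_span hPJ hP

theorem exists_standardRepresentation
    (hGB : initialIdeal lam (Ideal.span (Set.range g)) =
      Ideal.span (Set.range fun l => initialForm lam (g l)))
    {w : ℤ} {P : MvPolynomial σ K} (hPJ : P ∈ Ideal.span (Set.range g))
    (hP : P ∈ weightLE K lam w) :
    ∃ c : ι → MvPolynomial σ K,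
      P = ∑ l, c l * g l ∧ ∀ l, c l ∈ weightLE K lam (w - maxWeight lam (g l)) := by
  obtain ⟨Q, hQ, hQw⟩ := exists_isTHomogeneous_coeffs_of_mem_span
    (fun l => isTHomogeneous_homogenize_maxWeight (g l)) (isTHomogeneous_homogenize hP)
    (homogenize_mem_span_homogenize hGB hPJ hP)
  refine ⟨fun l => (Q l).eval 1, ?_, fun l => (hQw l).eval_one_mem_weightLE⟩
  simpa [Polynomial.eval_finsetSum, eval_one_homogenize] using congrArg (Polynomial.eval 1) hQ

end StandardRepresentation

section SumElim

variable {σ τ R : Type*} [CommRing R]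

theorem aeval_sum_elim_X_rename_inl (u : τ → MvPolynomial σ R) (s : MvPolynomial σ R) :
    aeval (Sum.elim X u) (rename Sum.inl s) = s := by
  rw [aeval_rename, Sum.elim_comp_inl, aeval_X_left_apply]

theorem mem_span_X_inr_iff {f : MvPolynomial (σ ⊕ τ) R} :
    f ∈ Ideal.span (Set.range fun l : τ => (X (Sum.inr l) : MvPolynomial (σ ⊕ τ) R)) ↔
      aeval (Sum.elim X (0 : τ → MvPolynomial σ R)) f = 0 := by
  set E := Ideal.span (Set.range fun l : τ => (X (Sum.inr l) : MvPolynomial (σ ⊕ τ) R))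
  refine ⟨fun hf => ?_, fun hf => ?_⟩
  · suffices E ≤ RingHom.ker (aeval (Sum.elim X (0 : τ → MvPolynomial σ R))) from this hf
    rw [Ideal.span_le]
    rintro _ ⟨l, rfl⟩
    simp
  · have hmk : (Ideal.Quotient.mkₐ R E).comp ((rename Sum.inl).comp (aeval (Sum.elim X 0))) =
        Ideal.Quotient.mkₐ R E := by
      ext (j | l)
      · simp
      · simp [E]
    have := DFunLike.congr_fun hmk f
    simp only [AlgHom.comp_apply, hf, map_zero, Ideal.Quotient.mkₐ_eq_mk] at this
    exact Ideal.Quotient.eq_zero_iff_mem.1 this.symm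

theorem aeval_sum_elim_X_mem_span_range {u : τ → MvPolynomial σ R}
    {f : MvPolynomial (σ ⊕ τ) R}
    (hf : aeval (Sum.elim X (0 : τ → MvPolynomial σ R)) f = 0) :
    aeval (Sum.elim X u) f ∈ Ideal.span (Set.range u) := by
  suffices Ideal.span (Set.range fun l : τ => (X (Sum.inr l) : MvPolynomial (σ ⊕ τ) R)) ≤
      (Ideal.span (Set.range u)).comap (aeval (Sum.elim X u)) from this (mem_span_X_inr_iff.2 hf)
  rw [Ideal.span_le]
  rintro _ ⟨l, rfl⟩
  simpa [-aeval_eq_bind₁] using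
    (Ideal.subset_span ⟨l, rfl⟩ : u l ∈ Ideal.span (Set.range u))

theorem isWeightedHomogeneous_sum_elim_X {lam : σ → ℤ} {u : τ → MvPolynomial σ R}
    {μ : τ → ℤ} (hu : ∀ l, IsWeightedHomogeneous lam (u l) (μ l)) (i : σ ⊕ τ) :
    IsWeightedHomogeneous lam (Sum.elim X u i) (Sum.elim lam μ i) := by
  cases i with
  | inl j => exact isWeightedHomogeneous_X R lam j
  | inr l => exact hu l

theorem sum_elim_X_sub_initialForm_mem_weightLE {lam : σ → ℤ} (g : τ → MvPolynomial σ R)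
    (i : σ ⊕ τ) :
    Sum.elim X g i - Sum.elim X (fun l => initialForm lam (g l)) i ∈
      weightLE R lam (Sum.elim lam (fun l => maxWeight lam (g l)) i - 1) := by
  cases i with
  | inl j => simp
  | inr l => exact sub_initialForm_mem_weightLE (g l)

end SumElim

section Syzygy

variable {k : Type*} [CommRing k] {q N : ℕ} {lam : Fin q → ℤ}

theorem mem_syzygyIdeal_iff {g : Fin N → MvPolynomial (Fin q) k}
    {f : MvPolynomial (Fin q ⊕ Fin N) k} :
    f ∈ syzygyIdeal g ↔
      aeval (Sum.elim X (0 : Fin N → MvPolynomial (Fin q) k)) f = 0 ∧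
        aeval (Sum.elim X g) f = 0 := by
  rw [syzygyIdeal, Submodule.mem_inf, mem_span_X_inr_iff, RingHom.mem_ker]

theorem weightedHomogeneousComponent_mem_syzygyIdeal {g : Fin N → MvPolynomial (Fin q) k}
    {μ : Fin N → ℤ} (hg : ∀ l, IsWeightedHomogeneous lam (g l) (μ l))
    {f : MvPolynomial (Fin q ⊕ Fin N) k} (hf : f ∈ syzygyIdeal g) (w : ℤ) :
    weightedHomogeneousComponent (Sum.elim lam μ) w f ∈ syzygyIdeal g := by
  rw [mem_syzygyIdeal_iff] at hf ⊢
  constructor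
  · rw [← weightedHomogeneousComponent_aeval (isWeightedHomogeneous_sum_elim_X (u := 0)
      fun l => isWeightedHomogeneous_zero k lam (μ l)), hf.1, map_zero]
  · rw [← weightedHomogeneousComponent_aeval (isWeightedHomogeneous_sum_elim_X hg), hf.2,
      map_zero]

end Syzygy

section Blowup

variable {k : Type*} [CommRing k] {q m n : ℕ}

def blowupIdeal (I : Ideal (MvPolynomial (Fin q) k)) (g : Fin (m + n) → MvPolynomial (Fin q) k) :
    Ideal (MvPolynomial (Fin q ⊕ Fin (m + n)) k) :=
  Ideal.map (rename Sum.inl :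
        MvPolynomial (Fin q) k →ₐ[k] MvPolynomial (Fin q ⊕ Fin (m + n)) k) I
    + Ideal.span (Set.range fun i : Fin m =>
        (X (Sum.inr (Fin.castAdd n i)) : MvPolynomial (Fin q ⊕ Fin (m + n)) k))
    + syzygyIdeal g

theorem mem_blowupIdeal_of_aeval_mem (g : Fin (m + n) → MvPolynomial (Fin q) k)
    {f : MvPolynomial (Fin q ⊕ Fin (m + n)) k}
    (h0 : aeval (Sum.elim X (0 : Fin (m + n) → MvPolynomial (Fin q) k)) f ∈
      Ideal.span (Set.range fun i : Fin m => g (Fin.castAdd n i)))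
    (hg : aeval (Sum.elim X g) f ∈ Ideal.span (Set.range fun i : Fin m => g (Fin.castAdd n i))) :
    f ∈ blowupIdeal (Ideal.span (Set.range fun i : Fin m => g (Fin.castAdd n i))) g := by
  set η : MvPolynomial (Fin q ⊕ Fin (m + n)) k →ₐ[k] MvPolynomial (Fin q) k :=
    aeval (Sum.elim X 0)
  set f' := f - rename Sum.inl (η f)
  have hf'0 : η f' = 0 := by simp [f', η, aeval_sum_elim_X_rename_inl, -aeval_eq_bind₁]
  have hf'g : aeval (Sum.elim X g) f' ∈
      Ideal.span (Set.range fun i : Fin m => g (Fin.castAdd n i)) := by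
    simpa [f', η, aeval_sum_elim_X_rename_inl, -aeval_eq_bind₁] using sub_mem hg h0
  obtain ⟨c, hc⟩ := (Submodule.mem_span_range_iff_exists_fun _).1 hf'g
  set E := ∑ i : Fin m, rename Sum.inl (c i) * X (Sum.inr (Fin.castAdd n i))
  have hsyz : f' - E ∈ syzygyIdeal g := by
    refine mem_syzygyIdeal_iff.2 ⟨?_, ?_⟩
    · simpa [E, η, aeval_sum_elim_X_rename_inl, -aeval_eq_bind₁] using hf'0
    · simp [E, aeval_sum_elim_X_rename_inl, ← hc, -aeval_eq_bind₁]
  rw [show f = rename Sum.inl (η f) + E + (f' - E) by simp only [f']; ring]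
  exact add_mem (add_mem (Ideal.mem_sup_left (Ideal.mem_sup_left (Ideal.mem_map_of_mem _ h0)))
    (Ideal.mem_sup_left (Ideal.mem_sup_right (Ideal.sum_mem _ fun i _ =>
      Ideal.mul_mem_left _ _ (Ideal.subset_span ⟨i, rfl⟩))))) (Ideal.mem_sup_right hsyz)

theorem mem_blowupIdeal_iff (g : Fin (m + n) → MvPolynomial (Fin q) k)
    {f : MvPolynomial (Fin q ⊕ Fin (m + n)) k} :
    f ∈ blowupIdeal (Ideal.span (Set.range fun i : Fin m => g (Fin.castAdd n i))) g ↔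
      aeval (Sum.elim X (0 : Fin (m + n) → MvPolynomial (Fin q) k)) f ∈
          Ideal.span (Set.range fun i : Fin m => g (Fin.castAdd n i)) ∧
        aeval (Sum.elim X g) f ∈ Ideal.span (Set.range fun i : Fin m => g (Fin.castAdd n i)) := by
  refine ⟨fun hf => ?_, fun h => mem_blowupIdeal_of_aeval_mem g h.1 h.2⟩
  set I := Ideal.span (Set.range fun i : Fin m => g (Fin.castAdd n i))
  set η : MvPolynomial (Fin q ⊕ Fin (m + n)) k →ₐ[k] MvPolynomial (Fin q) k :=
    aeval (Sum.elim X 0)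
  set ev : MvPolynomial (Fin q ⊕ Fin (m + n)) k →ₐ[k] MvPolynomial (Fin q) k :=
    aeval (Sum.elim X g)
  suffices blowupIdeal I g ≤ I.comap η ⊓ I.comap ev from Submodule.mem_inf.1 (this hf)
  refine sup_le (sup_le ?_ ?_) fun f hf => ?_
  · refine Ideal.map_le_iff_le_comap.2 fun s hs => ?_
    simpa [η, ev, aeval_sum_elim_X_rename_inl, -aeval_eq_bind₁] using hs
  · refine Ideal.span_le.2 ?_
    rintro _ ⟨i, rfl⟩
    simpa [η, ev, -aeval_eq_bind₁] using
      (Ideal.subset_span ⟨i, rfl⟩ : g (Fin.castAdd n i) ∈ I)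
  · obtain ⟨h0, hg⟩ := mem_syzygyIdeal_iff.1 hf
    simp [η, ev, h0, hg, -aeval_eq_bind₁]

end Blowup

section Degeneration

variable {k : Type*} [CommRing k] {q : ℕ} {lam : Fin q → ℤ}

theorem initialIdeal_blowupIdeal_le {m n : ℕ} (g : Fin (m + n) → MvPolynomial (Fin q) k)
    (hGBI : initialIdeal lam (Ideal.span (Set.range fun i : Fin m => g (Fin.castAdd n i))) =
      Ideal.span (Set.range fun i : Fin m => initialForm lam (g (Fin.castAdd n i)))) :
    initialIdeal (Sum.elim lam fun i => maxWeight lam (g i))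
        (blowupIdeal (Ideal.span (Set.range fun i : Fin m => g (Fin.castAdd n i))) g) ≤
      blowupIdeal (initialIdeal lam (Ideal.span (Set.range fun i : Fin m => g (Fin.castAdd n i))))
        fun i => initialForm lam (g i) := by
  have h0 := isWeightedHomogeneous_sum_elim_X (u := 0) fun i : Fin (m + n) =>
    isWeightedHomogeneous_zero k lam (maxWeight lam (g i))
  have hin := isWeightedHomogeneous_sum_elim_X fun i =>
    isWeightedHomogeneous_initialForm (lam := lam) (g i)
  have hsub := sum_elim_X_sub_initialForm_mem_weightLE (lam := lam) g
  refine Ideal.span_le.2 ?_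
  rintro _ ⟨f, hf, -, rfl⟩
  rw [SetLike.mem_coe, hGBI]
  refine (mem_blowupIdeal_iff (fun i => initialForm lam (g i))).2 ?_
  rw [← hGBI]
  rw [mem_blowupIdeal_iff] at hf
  have hfw := mem_weightLE_maxWeight (lam := Sum.elim lam fun i => maxWeight lam (g i)) f
  rw [initialForm_eq_weightedHomogeneousComponent]
  constructor
  · rw [← weightedHomogeneousComponent_aeval h0]
    exact weightedHomogeneousComponent_mem_initialIdeal hf.1
      (aeval_mem_weightLE_of_isWeightedHomogeneous h0 hfw)
  · rw [← weightedHomogeneousComponent_aeval_of_mem_weightLE hin hsub hfw]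
    exact weightedHomogeneousComponent_mem_initialIdeal hf.2 (aeval_mem_weightLE hin hsub hfw)

variable [IsNoetherianRing k] {N : ℕ} {g : Fin N → MvPolynomial (Fin q) k}

theorem mem_initialIdeal_syzygyIdeal_of_isWeightedHomogeneous
    (hGB : initialIdeal lam (Ideal.span (Set.range g)) =
      Ideal.span (Set.range fun l => initialForm lam (g l)))
    {w : ℤ} {G : MvPolynomial (Fin q ⊕ Fin N) k}
    (hG : IsWeightedHomogeneous (Sum.elim lam fun l => maxWeight lam (g l)) G w)
    (hGsyz : G ∈ syzygyIdeal fun l => initialForm lam (g l)) :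
    G ∈ initialIdeal (Sum.elim lam fun l => maxWeight lam (g l)) (syzygyIdeal g) := by
  by_cases hG0 : G = 0
  · simp [hG0]
  obtain ⟨h0, hin⟩ := mem_syzygyIdeal_iff.1 hGsyz
  have hPw : aeval (Sum.elim X g) G ∈ weightLE k lam (w - 1) := by
    simpa [hin, -aeval_eq_bind₁] using aeval_sub_aeval_mem_weightLE
      (isWeightedHomogeneous_sum_elim_X fun l => isWeightedHomogeneous_initialForm (g l))
      (sum_elim_X_sub_initialForm_mem_weightLE g) hG.mem_weightLE
  obtain ⟨c, hc, hcw⟩ :=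
    exists_standardRepresentation hGB (aeval_sum_elim_X_mem_span_range h0) hPw
  set f := G - ∑ l, rename Sum.inl (c l) * X (Sum.inr l)
  have hf : f ∈ syzygyIdeal g := by
    refine mem_syzygyIdeal_iff.2 ⟨?_, ?_⟩
    · simp [f, h0, aeval_sum_elim_X_rename_inl, -aeval_eq_bind₁]
    · simp [f, aeval_sum_elim_X_rename_inl, ← hc, -aeval_eq_bind₁]
  have hfG : f - G ∈ weightLE k (Sum.elim lam fun l => maxWeight lam (g l)) (w - 1) := by
    rw [show f - G = -∑ l, rename Sum.inl (c l) * X (Sum.inr l) by simp only [f]; ring]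
    refine neg_mem (Submodule.sum_mem _ fun l _ => ?_)
    convert mul_mem_weightLE (rename_mem_weightLE (e := Sum.inl)
      (lam' := Sum.elim lam fun l => maxWeight lam (g l)) (fun _ => rfl) (hcw l))
      (isWeightedHomogeneous_X k (Sum.elim lam fun l => maxWeight lam (g l))
        (Sum.inr l)).mem_weightLE
      using 2
    simp
  have hfin : initialForm (Sum.elim lam fun l => maxWeight lam (g l)) f = G := by
    simpa using initialForm_add_of_mem_weightLE hG0 hG hfG
  refine Ideal.subset_span ⟨f, hf, fun h => hG0 ?_, hfin.symm⟩
  rw [← hfin, h, initialForm_eq_weightedHomogeneousComponent, map_zero]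

theorem syzygyIdeal_initialForm_le
    (hGB : initialIdeal lam (Ideal.span (Set.range g)) =
      Ideal.span (Set.range fun l => initialForm lam (g l))) :
    syzygyIdeal (fun l => initialForm lam (g l)) ≤
      initialIdeal (Sum.elim lam fun l => maxWeight lam (g l)) (syzygyIdeal g) := by
  intro f hf
  rw [← sum_weightedHomogeneousComponent (Sum.elim lam fun l => maxWeight lam (g l)) f,
    finsum_eq_sum _ (weightedHomogeneousComponent_finsupp f)]
  exact Submodule.sum_mem _ fun w _ =>
    mem_initialIdeal_syzygyIdeal_of_isWeightedHomogeneous hGB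
      (weightedHomogeneousComponent_isWeightedHomogeneous w f)
      (weightedHomogeneousComponent_mem_syzygyIdeal
        (fun l => isWeightedHomogeneous_initialForm (g l)) hf w)

theorem blowupIdeal_initialForm_le_initialIdeal {m n : ℕ} (I : Ideal (MvPolynomial (Fin q) k))
    (g : Fin (m + n) → MvPolynomial (Fin q) k)
    (hGB : initialIdeal lam (Ideal.span (Set.range g)) =
      Ideal.span (Set.range fun l => initialForm lam (g l))) :
    blowupIdeal (initialIdeal lam I) (fun i => initialForm lam (g i)) ≤
      initialIdeal (Sum.elim lam fun i => maxWeight lam (g i)) (blowupIdeal I g) := by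
  refine sup_le (sup_le ?_ ?_) ?_
  · exact (map_rename_initialIdeal_le (lam' := Sum.elim lam fun i => maxWeight lam (g i))
      Sum.inl_injective (fun _ => rfl) I).trans (initialIdeal_mono (le_sup_left.trans le_sup_left))
  · rw [Ideal.span_le]
    rintro _ ⟨i, rfl⟩
    exact (isWeightedHomogeneous_X k _ _).mem_initialIdeal
      (Ideal.mem_sup_left (Ideal.mem_sup_right (Ideal.subset_span ⟨i, rfl⟩)))
  · exact (syzygyIdeal_initialForm_le hGB).trans (initialIdeal_mono le_sup_right)

end Degeneration

end MvPolynomial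

theorem initialIdeal_blowupPresentation_general
    {k : Type*} [Field k] (q m n : ℕ) (lam : Fin q → ℤ)
    (g : Fin (m + n) → MvPolynomial (Fin q) k)
    (I J : Ideal (MvPolynomial (Fin q) k))
    (hI : I = Ideal.span (Set.range fun i : Fin m => g (Fin.castAdd n i)))
    (hJ : J = Ideal.span (Set.range g))
    (hGBI : initialIdeal lam I =
      Ideal.span (Set.range fun i : Fin m => initialForm lam (g (Fin.castAdd n i))))
    (hGBJ : initialIdeal lam J =
      Ideal.span (Set.range fun i : Fin (m + n) => initialForm lam (g i))) :
    initialIdeal (Sum.elim lam fun i : Fin (m + n) => maxWeight lam (g i))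
      (Ideal.map (rename Sum.inl :
            MvPolynomial (Fin q) k →ₐ[k] MvPolynomial (Fin q ⊕ Fin (m + n)) k) I
        + Ideal.span (Set.range fun i : Fin m =>
            (X (Sum.inr (Fin.castAdd n i)) : MvPolynomial (Fin q ⊕ Fin (m + n)) k))
        + syzygyIdeal g)
    =
    Ideal.map (rename Sum.inl :
          MvPolynomial (Fin q) k →ₐ[k] MvPolynomial (Fin q ⊕ Fin (m + n)) k)
        (initialIdeal lam I)
      + Ideal.span (Set.range fun i : Fin m =>
          (X (Sum.inr (Fin.castAdd n i)) : MvPolynomial (Fin q ⊕ Fin (m + n)) k))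
      + syzygyIdeal (fun i => initialForm lam (g i)) := by
  subst hI hJ
  exact le_antisymm (initialIdeal_blowupIdeal_le g hGBI)
    (blowupIdeal_initialForm_le_initialIdeal _ g hGBJ)

/-- Let `S = k[x_1,…,x_q]`, `λ` an integral weight function, and
`g_1,…,g_{m+n}` nonzero polynomials each having a unique term of maximal `λ`-weight.  Let
`I = (g_1,…,g_m) ⊆ J = (g_1,…,g_{m+n})`, and assume these generating sets are Gröbner bases
with respect to `λ`.  Define `λ̃` on `S[ε_1,…,ε_{m+n}]` by `λ̃(x_j) = λ(x_j)` and
`λ̃(ε_i) = λ(in_λ(g_i))`.  Then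
`in_{λ̃}(I·S[ε] + (ε_1,…,ε_m) + Syz({g_i})) = in_λ(I)·S[ε] + (ε_1,…,ε_m) + Syz({in_λ(g_i)})`:
the blow-up algebra of `S/I` along `J/I` Gröbner-degenerates via `λ̃` to the blow-up
algebra of `S/in_λ(I)` along `in_λ(J)/in_λ(I)`. -/
theorem initialIdeal_blowupPresentation
    {k : Type*} [Field k] (q m n : ℕ) (lam : Fin q → ℤ)
    (g : Fin (m + n) → MvPolynomial (Fin q) k)
    (hg0 : ∀ i, g i ≠ 0)
    (hg1 : ∀ i, ∃! d : Fin q →₀ ℕ, d ∈ (g i).support ∧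
      ∀ e ∈ (g i).support, monWeight lam e ≤ monWeight lam d)
    (I J : Ideal (MvPolynomial (Fin q) k))
    (hI : I = Ideal.span (Set.range fun i : Fin m => g (Fin.castAdd n i)))
    (hJ : J = Ideal.span (Set.range g))
    (hGBI : initialIdeal lam I =
      Ideal.span (Set.range fun i : Fin m => initialForm lam (g (Fin.castAdd n i))))
    (hGBJ : initialIdeal lam J =
      Ideal.span (Set.range fun i : Fin (m + n) => initialForm lam (g i))) :
    initialIdeal (Sum.elim lam fun i : Fin (m + n) => maxWeight lam (g i))
      (Ideal.map (rename Sum.inl :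
            MvPolynomial (Fin q) k →ₐ[k] MvPolynomial (Fin q ⊕ Fin (m + n)) k) I
        + Ideal.span (Set.range fun i : Fin m =>
            (X (Sum.inr (Fin.castAdd n i)) : MvPolynomial (Fin q ⊕ Fin (m + n)) k))
        + syzygyIdeal g)
    =
    Ideal.map (rename Sum.inl :
          MvPolynomial (Fin q) k →ₐ[k] MvPolynomial (Fin q ⊕ Fin (m + n)) k)
        (initialIdeal lam I)
      + Ideal.span (Set.range fun i : Fin m =>
          (X (Sum.inr (Fin.castAdd n i)) : MvPolynomial (Fin q ⊕ Fin (m + n)) k))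
      + syzygyIdeal (fun i => initialForm lam (g i)) :=
  initialIdeal_blowupPresentation_general q m n lam g I J hI hJ hGBI hGBJ

end
end

section
/- Let R be a Noetherian integral domain, let r ≥ 1, and for each k = 1,…,r let I_k = (g_{k,1},…,g_{k,n_k}) be an ideal of R given with a finite generating set. Let S = R[z_{k,i} : 1 ≤ k ≤ r, 1 ≤ i ≤ n_k] be the polynomial ring with one variable z_{k,i} for each generator g_{k,i}, and let ev : S → R be the R-algebra homomorphism with ev(z_{k,i}) = g_{k,i}. Set Ī_k = (z_{k,1},…,z_{k,n_k}) ⊆ S, set Syz(I_k) = Ī_k ∩ ker(ev), and set Syz(∏_{k=1}^r I_k) = P ∩ ker(ev), where P ⊆ S is the ideal generated by the n_1⋯n_r products z_{1,i_1}·z_{2,i_2}·⋯·z_{r,i_r} over all index tuples (i_1,…,i_r). Then Syz(∏_{k=1}^r I_k) = Σ_{∅ ≠ M ⊆ {1,…,r}} ( ∏_{k ∉ M} Ī_k ) · ( ⋂_{k ∈ M} Syz(I_k) ), an equality of ideals of S. -/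
/-!
Both `P` and each `Īₖ` are monomial ideals: a monomial lies in `Īₖ` iff it involves a variable of
block `k`, and in `P` iff it involves a variable of every block. Hence `P = ⋂ₖ Īₖ`, so
`Syz(∏ₖ Iₖ) = ⋂ₖ Syz(Iₖ)` is the summand for `M = {1, …, r}`. Conversely every summand lies in
each `Īₖ`, through its factor `Īₖ` if `k ∉ M` and through `Syz(Iₖ)` if `k ∈ M`, and lies in
`ker ev` through `Syz(Iₖ)` for any `k ∈ M`.
-/

open MvPolynomial

noncomputable section

/-- The polynomial ring `S = R[z_{k,i}]` with one variable for each generator `g_{k,i}`. -/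
abbrev GenPolyRing (R : Type*) [CommRing R] {r : ℕ} (n : Fin r → ℕ) : Type _ :=
  MvPolynomial (Σ k : Fin r, Fin (n k)) R

/-- The ideal `Ī_k = (z_{k,1}, …, z_{k,n_k})` of `S`. -/
def Ibar (R : Type*) [CommRing R] {r : ℕ} (n : Fin r → ℕ) (k : Fin r) :
    Ideal (GenPolyRing R n) :=
  Ideal.span (Set.range fun i : Fin (n k) => (X ⟨k, i⟩ : GenPolyRing R n))

/-- The evaluation map `ev : S → R` sending `z_{k,i}` to `g_{k,i}`. -/
def evMap {R : Type*} [CommRing R] {r : ℕ} {n : Fin r → ℕ}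
    (g : (Σ k : Fin r, Fin (n k)) → R) : GenPolyRing R n →ₐ[R] R :=
  aeval g

/-- The syzygy ideal `Syz(I_k) = Ī_k ∩ ker ev`. -/
def syzOf {R : Type*} [CommRing R] {r : ℕ} {n : Fin r → ℕ}
    (g : (Σ k : Fin r, Fin (n k)) → R) (k : Fin r) : Ideal (GenPolyRing R n) :=
  Ibar R n k ⊓ RingHom.ker (evMap g)

/-- The syzygy ideal `Syz(∏_k I_k) = P ∩ ker ev` of the products `g_{1,i₁}⋯g_{r,i_r}`, where
`P` is the ideal generated by the products `z_{1,i₁}⋯z_{r,i_r}`. -/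
def syzProd {R : Type*} [CommRing R] {r : ℕ} {n : Fin r → ℕ}
    (g : (Σ k : Fin r, Fin (n k)) → R) : Ideal (GenPolyRing R n) :=
  Ideal.span (Set.range fun t : (k : Fin r) → Fin (n k) =>
      ∏ k : Fin r, (X ⟨k, t k⟩ : GenPolyRing R n))
    ⊓ RingHom.ker (evMap g)

namespace MvPolynomial

variable {R ι : Type*} [CommSemiring R] {κ : ι → Type*}

theorem mem_span_range_X_sigma_iff (k : ι) {f : MvPolynomial (Σ k, κ k) R} :
    f ∈ Ideal.span (Set.range fun i : κ k => (X ⟨k, i⟩ : MvPolynomial (Σ k, κ k) R)) ↔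
      ∀ m ∈ f.support, ∃ i, m ⟨k, i⟩ ≠ 0 := by
  rw [← Set.image_univ, ← Set.image_image (g := X) (f := Sigma.mk k), mem_ideal_span_X_image]
  simp

theorem sum_single_sigma_le [Fintype ι] {m : (Σ k, κ k) →₀ ℕ} (t : (k : ι) → κ k)
    (ht : ∀ k, m ⟨k, t k⟩ ≠ 0) : ∑ k, Finsupp.single (⟨k, t k⟩ : Σ k, κ k) 1 ≤ m := by
  classical
  rintro ⟨k, j⟩
  rw [Finsupp.finsetSum_apply, Finset.sum_eq_single k
    (fun l _ hl => Finsupp.single_eq_of_ne fun h => hl (congrArg Sigma.fst h).symm)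
    (fun h => absurd (Finset.mem_univ k) h), Finsupp.single_apply]
  split_ifs with h
  · exact Nat.one_le_iff_ne_zero.mpr (h ▸ ht k)
  · exact Nat.zero_le _

theorem span_prod_X_sigma_eq_iInf [Fintype ι] :
    Ideal.span (Set.range fun t : (k : ι) → κ k =>
        ∏ k, (X ⟨k, t k⟩ : MvPolynomial (Σ k, κ k) R)) =
      ⨅ k, Ideal.span (Set.range fun i : κ k => (X ⟨k, i⟩ : MvPolynomial (Σ k, κ k) R)) := by
  refine le_antisymm (le_iInf fun k => Ideal.span_le.mpr ?_) fun f hf => ?_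
  · rintro _ ⟨t, rfl⟩
    exact Ideal.prod_mem _ (Finset.mem_univ k) (Ideal.subset_span ⟨t k, rfl⟩)
  · have hX : (Set.range fun t : (k : ι) → κ k =>
          ∏ k, (X ⟨k, t k⟩ : MvPolynomial (Σ k, κ k) R)) =
        (fun s => monomial s 1) '' Set.range fun t : (k : ι) → κ k =>
          ∑ k, Finsupp.single (⟨k, t k⟩ : Σ k, κ k) 1 := by
      rw [← Set.range_comp]
      congr 1
      funext t
      simp [monomial_sum_index, X]
    rw [hX, mem_ideal_span_monomial_image]
    intro m hm
    have hblock k := (mem_span_range_X_sigma_iff k).mp (Ideal.mem_iInf.mp hf k) m hm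
    choose t ht using hblock
    exact ⟨_, ⟨t, rfl⟩, sum_single_sigma_le t ht⟩

end MvPolynomial

section Syzygies

variable {R : Type*} [CommRing R] {r : ℕ} {n : Fin r → ℕ} (g : (Σ k : Fin r, Fin (n k)) → R)

theorem syzProd_eq_iInf_Ibar_inf_ker :
    syzProd g = (⨅ k, Ibar R n k) ⊓ RingHom.ker (evMap g) := by
  rw [syzProd, span_prod_X_sigma_eq_iInf]
  rfl

theorem syzProd_eq_iInf_syzOf [Nonempty (Fin r)] : syzProd g = ⨅ k, syzOf g k := by
  rw [syzProd_eq_iInf_Ibar_inf_ker, iInf_inf]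
  rfl

theorem prod_Ibar_mul_iInf_syzOf_le_syzProd {M : Finset (Fin r)} (hM : M.Nonempty) :
    (∏ k ∈ Mᶜ, Ibar R n k) * ⨅ k ∈ M, syzOf g k ≤ syzProd g := by
  obtain ⟨k₀, hk₀⟩ := hM
  rw [syzProd_eq_iInf_Ibar_inf_ker]
  refine le_inf (le_iInf fun k => ?_) ?_
  · by_cases hk : k ∈ M
    · exact Ideal.mul_le_right.trans ((iInf₂_le k hk).trans inf_le_left)
    · exact Ideal.mul_le_left.trans
        (Ideal.prod_le_inf.trans (Finset.inf_le (Finset.mem_compl.mpr hk)))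
  · exact Ideal.mul_le_right.trans ((iInf₂_le k₀ hk₀).trans inf_le_right)

end Syzygies

theorem syzProd_eq_sum_general
    (R : Type*) [CommRing R]
    (r : ℕ) (hr : 1 ≤ r) (n : Fin r → ℕ)
    (g : (Σ k : Fin r, Fin (n k)) → R) :
    syzProd g =
      ⨆ (M : Finset (Fin r)) (_ : M.Nonempty),
        (∏ k ∈ Mᶜ, Ibar R n k) * ⨅ k ∈ M, syzOf g k := by
  have : Nonempty (Fin r) := ⟨⟨0, hr⟩⟩
  refine le_antisymm ?_ (iSup₂_le fun M hM => prod_Ibar_mul_iInf_syzOf_le_syzProd g hM)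
  refine le_iSup₂_of_le Finset.univ Finset.univ_nonempty ?_
  simp only [Finset.compl_univ, Finset.prod_empty, one_mul, Finset.mem_univ, iInf_pos]
  exact (syzProd_eq_iInf_syzOf g).le

/-- Let `R` be a Noetherian integral domain and `I_k = (g_{k,1},…,g_{k,n_k})`,
`k = 1,…,r`, ideals given with finite generating sets.  Then
`Syz(∏_k I_k) = Σ_{∅ ≠ M ⊆ {1,…,r}} (∏_{k ∉ M} Ī_k) · (⋂_{k ∈ M} Syz(I_k))`
as ideals of `S = R[z_{k,i}]`. -/
theorem syzProd_eq_sum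
    (R : Type*) [CommRing R] [IsDomain R] [IsNoetherianRing R]
    (r : ℕ) (hr : 1 ≤ r) (n : Fin r → ℕ)
    (g : (Σ k : Fin r, Fin (n k)) → R) :
    syzProd g =
      ⨆ (M : Finset (Fin r)) (_ : M.Nonempty),
        (∏ k ∈ Mᶜ, Ibar R n k) * ⨅ k ∈ M, syzOf g k :=
  syzProd_eq_sum_general R r hr n g

end
end

section
/- Let (W,S) be a Coxeter system with length function ℓ and let π ∈ W. Let T_1 and T_2 be words in the simple reflections such that the concatenation T_1T_2 is a reduced word for π, and let s be a simple reflection. Then the Demazure product Dem(T_1 · s · T_2) of the word obtained by inserting s between T_1 and T_2 is either equal to π or covers π in the Bruhat order (in particular ℓ(Dem(T_1 · s · T_2)) ≤ ℓ(π) + 1). -/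
noncomputable section

variable {B W : Type*} [Group W] {M : CoxeterMatrix B}

/-- One step of the Demazure product: multiply by the simple reflection `s` if this
increases the length, and do nothing otherwise. -/
def demazureStep (cs : CoxeterSystem M W) (w : W) (s : B) : W :=
  if cs.length w < cs.length (w * cs.simple s) then w * cs.simple s else w

/-- The Demazure product of a word, defined recursively from `Dem(∅) = 1` by
`Dem(Q ++ [s]) = Dem(Q)·s` if `ℓ(Dem(Q)·s) > ℓ(Dem(Q))` and `Dem(Q ++ [s]) = Dem(Q)`
otherwise. -/
def demazureProd (cs : CoxeterSystem M W) (Q : List B) : W :=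
  Q.foldl (demazureStep cs) 1

/-- The Bruhat order: `u ≤ w` iff some reduced word for `w` contains a (not necessarily
contiguous) subword which is a reduced word for `u`. -/
def bruhatLE (cs : CoxeterSystem M W) (u w : W) : Prop :=
  ∃ ω : List B, cs.IsReduced ω ∧ cs.wordProd ω = w ∧
    ∃ ω' : List B, ω'.Sublist ω ∧ cs.IsReduced ω' ∧ cs.wordProd ω' = u

/-- `w` covers `u` in the Bruhat order: `u ≤ w`, `u ≠ w` and `ℓ(w) = ℓ(u) + 1`. -/
def bruhatCovers (cs : CoxeterSystem M W) (u w : W) : Prop :=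
  bruhatLE cs u w ∧ u ≠ w ∧ cs.length w = cs.length u + 1

/-!
After `T₁`, which is reduced, the Demazure product is `π(T₁)`, and after the letter `s` it is
`π(T₁)` or a Bruhat cover `π(T₁)·s` of it. Reading the rest of the reduced word `T₁ T₂`, the
Demazure product stays equal to, or a Bruhat cover of, the product `u` of the letters of `T₁ T₂`
read so far. The only delicate step is a letter `t` that raises `u` but lowers its cover `d`; then
the lifting property forces `d = u·t`, and the Demazure product falls back onto `u·t`.

The lifting property rests on the strong exchange condition, proved as in Björner–Brenti: `W` acts
on `W × ZMod 2`, `s_i` conjugating the first coordinate and flipping the second at `s_i`. Hence the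
parity of the number of occurrences of a reflection `t` in the right inversion sequence of a word
depends only on the product of the word, and it is odd when `t` is a right inversion of that
product.
-/

theorem List.count_map_conj_self {G : Type*} [Group G] [DecidableEq G] (g : G) (l : List G) :
    (l.map (MulAut.conj g)).count g = l.count g := by
  simpa using List.count_map_of_injective l _ (MulAut.conj g).injective g

namespace CoxeterSystem

variable (cs : CoxeterSystem M W)

local prefix:100 "s " => cs.simple
local prefix:100 "π " => cs.wordProd
local prefix:100 "ℓ " => cs.length
local prefix:100 "ris " => cs.rightInvSeq
local prefix:100 "lis " => cs.leftInvSeq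

theorem wordProd_alternatingWord_add_two_mul (i j : B) (n : ℕ) :
    π (alternatingWord i j (n + 2 * M i j)) = π (alternatingWord i j n) := by
  have hdiv : (n + 2 * M i j) / 2 = n / 2 + M i j := by omega
  have heven : Even (n + 2 * M i j) ↔ Even n := by simp [Nat.even_add]
  simp only [prod_alternatingWord_eq_mul_pow, heven, hdiv, pow_add, simple_mul_simple_pow,
    mul_one]

theorem leftInvSeq_eq_map_rightInvSeq (ω : List B) :
    lis ω = (ris ω).map (MulAut.conj (π ω)) := by
  induction ω with
  | nil => rfl
  | cons i ω ih =>
    simp [leftInvSeq, rightInvSeq, ih, wordProd_cons, mul_assoc, Function.comp_def]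

theorem rightInvSeq_append (X Y : List B) :
    ris (X ++ Y) = (ris X).map (MulAut.conj (π Y)⁻¹) ++ ris Y := by
  induction X with
  | nil => rfl
  | cons i X ih =>
    simp [rightInvSeq, ih, wordProd_append, mul_assoc]

theorem rightInvSeq_eq_leftInvSeq_of_wordProd_eq_one {ω : List B} (h : π ω = 1) :
    ris ω = lis ω := by
  simp [leftInvSeq_eq_map_rightInvSeq, h]

theorem wordProd_alternatingWord_two_mul_eq_one (i j : B) :
    π (alternatingWord i j (2 * M i j)) = 1 := by
  simpa [alternatingWord] using cs.wordProd_alternatingWord_add_two_mul i j 0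

theorem even_count_rightInvSeq_alternatingWord_two_mul [DecidableEq W] (i j : B) (t : W) :
    Even ((ris (alternatingWord i j (2 * M i j))).count t) := by
  set l := lis (alternatingWord i j (2 * M i j)) with hl
  have hlen : l.length = 2 * M i j := by simp [hl]
  have hperiodic : l.drop (M i j) = l.take (M i j) := by
    apply List.ext_getElem (by simp [hlen]; omega)
    intro k hk _
    simp only [List.getElem_drop, List.getElem_take, hl]
    rw [getElem_leftInvSeq_alternatingWord _ _ _ _ _ (by simp at hk; omega),
      getElem_leftInvSeq_alternatingWord _ _ _ _ _ (by simp at hk; omega),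
      show 2 * (M i j + k) + 1 = 2 * k + 1 + 2 * M j i by rw [M.symmetric]; ring,
      wordProd_alternatingWord_add_two_mul]
  rw [cs.rightInvSeq_eq_leftInvSeq_of_wordProd_eq_one
      (cs.wordProd_alternatingWord_two_mul_eq_one i j), ← hl, ← List.take_append_drop (M i j) l,
    hperiodic, List.count_append]
  exact Even.add_self _

section ReflectionRepresentation

variable [DecidableEq W]

def simpleFlip (i : B) : Equiv.Perm (W × ZMod 2) :=
  Function.Involutive.toPerm (fun p => (s i * p.1 * s i, p.2 + if p.1 = s i then 1 else 0)) <| by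
    rintro ⟨w, e⟩
    have hconj : s i * w * s i = s i ↔ w = s i := by
      constructor
      · intro h
        calc w = s i * (s i * w * s i) * s i := by simp [mul_assoc]
          _ = s i := by simp [h]
      · rintro rfl
        simp
    by_cases hw : w = s i
    · simp [hw, add_assoc, CharTwo.add_self_eq_zero]
    · simp only [hw, hconj, if_false, add_zero]
      simp [mul_assoc]

theorem simpleFlip_apply (i : B) (p : W × ZMod 2) :
    cs.simpleFlip i p = (s i * p.1 * s i, p.2 + if p.1 = s i then 1 else 0) :=
  rfl

theorem prod_map_simpleFlip_apply (ω : List B) (p : W × ZMod 2) :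
    (ω.map cs.simpleFlip).prod p = (π ω * p.1 * (π ω)⁻¹, p.2 + (ris ω).count p.1) := by
  induction ω with
  | nil => simp
  | cons i ω ih =>
    have hcond : π ω * p.1 * (π ω)⁻¹ = s i ↔ (π ω)⁻¹ * s i * π ω = p.1 := by
      constructor <;> intro h <;> rw [← h] <;> group
    rw [List.map_cons, List.prod_cons, Equiv.Perm.mul_apply, ih, simpleFlip_apply]
    ext
    · simp [wordProd_cons, mul_assoc]
    · simp only [rightInvSeq, List.count_cons, hcond, beq_iff_eq]
      split_ifs <;> push_cast <;> ring

theorem isLiftable_simpleFlip : M.IsLiftable cs.simpleFlip := by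
  intro i j
  have hpow : ∀ n, (cs.simpleFlip i * cs.simpleFlip j) ^ n =
      ((alternatingWord i j (2 * n)).map cs.simpleFlip).prod := by
    intro n
    induction n with
    | zero => simp [alternatingWord]
    | succ n ih =>
      rw [show 2 * (n + 1) = 2 * n + 1 + 1 by ring, alternatingWord_succ', alternatingWord_succ',
        pow_succ', ih]
      simp [mul_assoc]
  ext p
  · simp [hpow, prod_map_simpleFlip_apply, wordProd_alternatingWord_two_mul_eq_one]
  · simp [hpow, prod_map_simpleFlip_apply,
      ZMod.natCast_eq_zero_iff_even.mpr (cs.even_count_rightInvSeq_alternatingWord_two_mul i j p.1)]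

theorem count_rightInvSeq_congr {ω ω' : List B} (h : π ω = π ω') (t : W) :
    ((ris ω).count t : ZMod 2) = (ris ω').count t := by
  let φ := cs.lift ⟨cs.simpleFlip, cs.isLiftable_simpleFlip⟩
  have hφ (ω : List B) : φ (π ω) = (ω.map cs.simpleFlip).prod := by
    simp [φ, wordProd, map_list_prod, Function.comp_def]
  simpa [hφ, prod_map_simpleFlip_apply] using congrArg (fun w => (φ w (t, 0)).2) h

end ReflectionRepresentation

theorem exists_wordProd_eq_count_rightInvSeq_eq_one [DecidableEq W] {t : W}
    (ht : cs.IsReflection t) : ∃ τ, π τ = t ∧ ((ris τ).count t : ZMod 2) = 1 := by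
  obtain ⟨v, k, rfl⟩ := ht
  obtain ⟨ρ, hρ⟩ := cs.wordProd_surjective v⁻¹
  -- In `ρ.reverse ++ k :: ρ`, the inversion sequence entries before `k` are those after it,
  -- conjugated by `t` and reversed.
  refine ⟨ρ.reverse ++ k :: ρ, by simp [wordProd_append, wordProd_cons, hρ, mul_assoc], ?_⟩
  have hconj :
      MulAut.conj (π (k :: ρ))⁻¹ * MulAut.conj (π ρ) = MulAut.conj (v * s k * v⁻¹) := by
    rw [← map_mul, wordProd_cons, hρ]
    simp [mul_assoc]
  rw [rightInvSeq_append, rightInvSeq_reverse, leftInvSeq_eq_map_rightInvSeq, List.map_reverse,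
    List.map_map, ← MulAut.coe_mul, hconj]
  simp only [List.count_append, List.count_reverse, List.count_map_conj_self, rightInvSeq,
    hρ, inv_inv, List.count_cons_self]
  push_cast
  linear_combination CharTwo.add_self_eq_zero ((ris ρ).count (v * s k * v⁻¹) : ZMod 2)

theorem mem_rightInvSeq_of_length_mul_lt {ω : List B} {t : W} (ht : cs.IsReflection t)
    (hlt : ℓ (π ω * t) < ℓ (π ω)) : t ∈ ris ω := by
  classical
  obtain ⟨σ, hσ, hσω⟩ := cs.exists_isReduced (π ω * t)
  obtain ⟨τ, hτt, hτ⟩ := cs.exists_wordProd_eq_count_rightInvSeq_eq_one ht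
  have hσ_not_mem : t ∉ ris σ := fun hmem => by
    have hinv := (cs.isRightInversion_of_mem_rightInvSeq hσ hmem).2
    rw [← hσω, mul_assoc, ht.mul_self, mul_one] at hinv
    omega
  have hcount : ((ris ω).count t : ZMod 2) = 1 := by
    rw [cs.count_rightInvSeq_congr (ω' := σ ++ τ) (by rw [wordProd_append, ← hσω, hτt,
      mul_assoc, ht.mul_self, mul_one]), rightInvSeq_append, List.count_append, hτt, ht.inv,
      List.count_map_conj_self, List.count_eq_zero_of_not_mem hσ_not_mem]
    simpa using hτ
  rw [← List.count_pos_iff]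
  by_contra h0
  simp [Nat.eq_zero_of_not_pos h0] at hcount

theorem exists_wordProd_mul_eq_wordProd_eraseIdx {ω : List B} {t : W} (ht : cs.IsReflection t)
    (hlt : ℓ (π ω * t) < ℓ (π ω)) : ∃ j < ω.length, π ω * t = π (ω.eraseIdx j) := by
  obtain ⟨j, hj, rfl⟩ := List.mem_iff_getElem.mp (cs.mem_rightInvSeq_of_length_mul_lt ht hlt)
  refine ⟨j, by simpa using hj, ?_⟩
  rw [← List.getD_eq_getElem _ 1 hj, wordProd_mul_getD_rightInvSeq]

theorem isReduced_append_singleton {ω : List B} {i : B} (hω : cs.IsReduced ω)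
    (hi : ℓ (π ω) < ℓ (π ω * s i)) : cs.IsReduced (ω ++ [i]) := by
  have := cs.length_mul_simple (π ω) i
  rw [IsReduced, wordProd_append, wordProd_singleton, List.length_append, ← hω.eq]
  simp only [List.length_singleton]
  omega

theorem eq_mul_simple_of_isReflection {u d r : W} {i : B} (hr : cs.IsReflection r)
    (hd : d = u * r) (hlen : ℓ d = ℓ u + 1) (hdi : ℓ (d * s i) < ℓ d)
    (hui : ℓ u < ℓ (u * s i)) : d = u * s i := by
  -- Exchange `r` in the reduced word `ω i` of `d`: deleting a letter of `ω` would make `u·s i`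
  -- too short, so the deleted letter is the final `i`.
  obtain ⟨ω, hω, hωd⟩ := cs.exists_isReduced (d * s i)
  have hd_eq : π (ω ++ [i]) = d := by simp [wordProd_append, ← hωd, mul_assoc]
  have hZ : cs.IsReduced (ω ++ [i]) :=
    cs.isReduced_append_singleton hω (by simpa [← hωd, mul_assoc] using hdi)
  have hu : u = π (ω ++ [i]) * r := by rw [hd_eq, hd, mul_assoc, hr.mul_self, mul_one]
  obtain ⟨j, hj, hexch⟩ :=
    cs.exists_wordProd_mul_eq_wordProd_eraseIdx hr (by rw [← hu, hd_eq]; omega)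
  rw [← hu] at hexch
  have hlenω : ω.length + 1 = ℓ d := by simpa [← hd_eq] using hZ.eq.symm
  rcases Nat.lt_or_ge j ω.length with hjω | hjω
  · rw [List.eraseIdx_append_of_lt_length hjω, wordProd_append, wordProd_singleton] at hexch
    have := cs.length_wordProd_le (ω.eraseIdx j)
    rw [List.length_eraseIdx_of_lt hjω, ← simple_mul_simple_cancel_right cs i (w := π _),
      ← hexch] at this
    omega
  · have hj0 : j - ω.length = 0 := by simp at hj; omega
    rw [List.eraseIdx_append_of_length_le hjω, hj0] at hexch
    simp [hexch, ← hωd, mul_assoc]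

end CoxeterSystem

theorem List.Sublist.exists_eq_append_cons_of_length_eq_succ {α : Type*} {l₁ l₂ : List α}
    (h : l₁.Sublist l₂) (hlen : l₂.length = l₁.length + 1) :
    ∃ K x L, l₂ = K ++ x :: L ∧ l₁ = K ++ L := by
  induction h with
  | slnil => simp at hlen
  | @cons l₁ l₂ a h _ => exact ⟨[], a, l₂, rfl, h.eq_of_length (by simpa using hlen.symm)⟩
  | @cons_cons l₁ l₂ a _ ih =>
    obtain ⟨K, x, L, rfl, rfl⟩ := ih (by simpa using hlen)
    exact ⟨a :: K, x, L, rfl, rfl⟩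

section Bruhat

variable {cs : CoxeterSystem M W}

local prefix:100 "s " => cs.simple
local prefix:100 "π " => cs.wordProd
local prefix:100 "ℓ " => cs.length

theorem bruhatCovers.exists_isReflection {u w : W} (h : bruhatCovers cs u w) :
    ∃ r, cs.IsReflection r ∧ w = u * r := by
  obtain ⟨⟨ω, hω, rfl, ω', hsub, hω', rfl⟩, -, hlen⟩ := h
  rw [hω.eq, hω'.eq] at hlen
  obtain ⟨K, x, L, rfl, rfl⟩ := hsub.exists_eq_append_cons_of_length_eq_succ hlen
  exact ⟨(π L)⁻¹ * s x * π L, ⟨(π L)⁻¹, x, by simp⟩,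
    by simp [CoxeterSystem.wordProd_append, CoxeterSystem.wordProd_cons, mul_assoc]⟩

theorem bruhatCovers_mul_simple_self {u : W} {i : B} (hu : ℓ u < ℓ (u * s i)) :
    bruhatCovers cs u (u * s i) := by
  obtain ⟨ω, hω, rfl⟩ := cs.exists_isReduced u
  refine ⟨⟨ω ++ [i], cs.isReduced_append_singleton hω hu,
    by simp [CoxeterSystem.wordProd_append], ω, List.sublist_append_left _ _, hω, rfl⟩,
    fun h => by simp [← h] at hu, ?_⟩
  have := cs.length_mul_simple (π ω) i
  omega

theorem bruhatCovers.mul_simple {u w : W} {i : B} (h : bruhatCovers cs u w)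
    (hu : ℓ u < ℓ (u * s i)) (hw : ℓ w < ℓ (w * s i)) :
    bruhatCovers cs (u * s i) (w * s i) := by
  obtain ⟨⟨ω, hω, rfl, ω', hsub, hω', rfl⟩, hne, hlen⟩ := h
  refine ⟨⟨ω ++ [i], cs.isReduced_append_singleton hω hw,
    by simp [CoxeterSystem.wordProd_append],
    ω' ++ [i], hsub.append (List.Sublist.refl _), cs.isReduced_append_singleton hω' hu,
    by simp [CoxeterSystem.wordProd_append]⟩, fun h => hne (mul_right_cancel h), ?_⟩
  have := cs.length_mul_simple (π ω) i
  have := cs.length_mul_simple (π ω') i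
  omega

theorem bruhatCovers.eq_mul_simple {u w : W} {i : B} (h : bruhatCovers cs u w)
    (hw : ℓ (w * s i) < ℓ w) (hu : ℓ u < ℓ (u * s i)) : w = u * s i := by
  obtain ⟨r, hr, hwr⟩ := h.exists_isReflection
  exact cs.eq_mul_simple_of_isReflection hr hwr h.2.2 hw hu

end Bruhat

section Demazure

variable (cs : CoxeterSystem M W)

local prefix:100 "s " => cs.simple
local prefix:100 "π " => cs.wordProd
local prefix:100 "ℓ " => cs.length

theorem demazureStep_eq_mul_simple {w : W} {i : B} (h : ℓ w < ℓ (w * s i)) :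
    demazureStep cs w i = w * s i :=
  if_pos h

theorem demazureStep_eq_self {w : W} {i : B} (h : ℓ (w * s i) < ℓ w) :
    demazureStep cs w i = w :=
  if_neg h.asymm

theorem length_mul_simple_of_length_mul_wordProd_cons {w : W} {i : B} {Y : List B}
    (h : ℓ (w * π (i :: Y)) = ℓ w + (i :: Y).length) :
    ℓ (w * s i) = ℓ w + 1 ∧ ℓ (w * s i * π Y) = ℓ (w * s i) + Y.length := by
  rw [CoxeterSystem.wordProd_cons, ← mul_assoc, List.length_cons] at h
  have := cs.length_mul_le (w * s i) (π Y)
  have := cs.length_wordProd_le Y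
  have := cs.length_mul_simple w i
  omega

theorem foldl_demazureStep_of_length_mul_wordProd (Y : List B) {w : W}
    (h : ℓ (w * π Y) = ℓ w + Y.length) : Y.foldl (demazureStep cs) w = w * π Y := by
  induction Y generalizing w with
  | nil => simp
  | cons i Y ih =>
    obtain ⟨hi, hY⟩ := length_mul_simple_of_length_mul_wordProd_cons cs h
    rw [List.foldl_cons, demazureStep_eq_mul_simple cs (by omega), ih hY,
      CoxeterSystem.wordProd_cons, mul_assoc]

theorem demazureStep_self_eq_or_bruhatCovers (u : W) (i : B) :
    demazureStep cs u i = u ∨ bruhatCovers cs u (demazureStep cs u i) := by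
  rcases lt_or_gt_of_ne (cs.length_mul_simple_ne u i).symm with hi | hi
  · exact .inr (demazureStep_eq_mul_simple cs hi ▸ bruhatCovers_mul_simple_self hi)
  · exact .inl (demazureStep_eq_self cs hi)

theorem demazureStep_eq_or_bruhatCovers {u d : W} {i : B} (h : d = u ∨ bruhatCovers cs u d)
    (hu : ℓ u < ℓ (u * s i)) :
    demazureStep cs d i = u * s i ∨ bruhatCovers cs (u * s i) (demazureStep cs d i) := by
  rcases h with rfl | h
  · exact .inl (demazureStep_eq_mul_simple cs hu)
  rcases lt_or_gt_of_ne (cs.length_mul_simple_ne d i).symm with hd | hd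
  · exact .inr (demazureStep_eq_mul_simple cs hd ▸ h.mul_simple hu hd)
  · exact .inl ((demazureStep_eq_self cs hd).trans (h.eq_mul_simple hd hu))

theorem foldl_demazureStep_eq_or_bruhatCovers (Y : List B) {u d : W}
    (hY : ℓ (u * π Y) = ℓ u + Y.length) (h : d = u ∨ bruhatCovers cs u d) :
    Y.foldl (demazureStep cs) d = u * π Y ∨
      bruhatCovers cs (u * π Y) (Y.foldl (demazureStep cs) d) := by
  induction Y generalizing u d with
  | nil => simpa using h
  | cons i Y ih =>
    obtain ⟨hi, hY⟩ := length_mul_simple_of_length_mul_wordProd_cons cs hY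
    rw [List.foldl_cons, CoxeterSystem.wordProd_cons, ← mul_assoc]
    exact ih hY (demazureStep_eq_or_bruhatCovers cs h (by omega))

end Demazure

/-- If `T₁ ++ T₂` is a reduced word for `π` and `s` is a simple reflection,
then the Demazure product of `T₁ ++ [s] ++ T₂` is either equal to `π` or covers `π` in the
Bruhat order (in particular its length is at most `ℓ(π) + 1`). -/
theorem demazureProd_insert_eq_or_covers
    (cs : CoxeterSystem M W) (π : W) (T₁ T₂ : List B) (s : B)
    (hred : cs.IsReduced (T₁ ++ T₂)) (hprod : cs.wordProd (T₁ ++ T₂) = π) :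
    (demazureProd cs (T₁ ++ s :: T₂) = π ∨
      bruhatCovers cs π (demazureProd cs (T₁ ++ s :: T₂))) ∧
    cs.length (demazureProd cs (T₁ ++ s :: T₂)) ≤ cs.length π + 1 := by
  have hT₁ : cs.IsReduced T₁ := by simpa using hred.take T₁.length
  have hT₂ : cs.length (cs.wordProd T₁ * cs.wordProd T₂) =
      cs.length (cs.wordProd T₁) + T₂.length := by
    rw [← cs.wordProd_append, hred.eq, hT₁.eq, List.length_append]
  have hprefix : T₁.foldl (demazureStep cs) 1 = cs.wordProd T₁ := by
    simpa using foldl_demazureStep_of_length_mul_wordProd cs T₁ (w := 1) (by simpa using hT₁.eq)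
  have hD : demazureProd cs (T₁ ++ s :: T₂) =
      T₂.foldl (demazureStep cs) (demazureStep cs (cs.wordProd T₁) s) := by
    rw [demazureProd, List.foldl_append, hprefix, List.foldl_cons]
  have key := foldl_demazureStep_eq_or_bruhatCovers cs T₂ hT₂
    (demazureStep_self_eq_or_bruhatCovers cs (cs.wordProd T₁) s)
  rw [← cs.wordProd_append, hprod, ← hD] at key
  rcases key with h | h
  · exact ⟨.inl h, by rw [h]; omega⟩
  · exact ⟨.inr h, h.2.2.le⟩

end
end

section
/- Let n ≥ 1, let 1 ≤ k ≤ n, and let r be a positive integer. Then in ℝⁿ the convex hull of the set of lattice points { x ∈ ℤⁿ : x_i ≥ 0 for all i, and x_1 + ⋯ + x_k ≥ r } equals the polyhedron { x ∈ ℝⁿ : x_i ≥ 0 for all i, and x_1 + ⋯ + x_k ≥ r }. (The case r = 1 says that removing from the cone ℝ_{≥0}ⁿ on the standard simplex the lattice points of the face {x_1 = ⋯ = x_k = 0} and taking the convex hull of the remaining lattice points is the same as intersecting the cone with the half-space {x_1 + ⋯ + x_k ≥ 1}.) -/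
/-!
A point `x ≥ 0` with `s = ∑_{i<k} x_i ≥ r > 0` splits as `y + (x - y)`, where
`y = (r / s) • (x_1, …, x_k, 0, …, 0)` is a convex combination of the lattice points `r • e_i`
(`i < k`) and `x - y ≥ 0`. The orthant is the convex hull of `ℕⁿ` (coordinatewise, `[0, ∞)` is
the convex hull of `ℕ`), and convex hulls commute with Minkowski sums, so `x` lies in the convex
hull of `{r • e_i | i < k} + ℕⁿ`, all of whose points are lattice points of the polyhedron.
-/

open Finset Pointwise

lemma Ici_zero_subset_convexHull_range_natCast :
    Set.Ici (0 : ℝ) ⊆ convexHull ℝ (Set.range ((↑) : ℕ → ℝ)) := by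
  intro x hx
  have hseg : segment ℝ (⌊x⌋₊ : ℝ) (⌊x⌋₊ + 1 : ℕ) ⊆ convexHull ℝ (Set.range ((↑) : ℕ → ℝ)) :=
    segment_subset_convexHull ⟨_, rfl⟩ ⟨_, rfl⟩
  refine hseg ?_
  rw [segment_eq_Icc (by simp)]
  exact ⟨Nat.floor_le hx, by exact_mod_cast (Nat.lt_floor_add_one x).le⟩

section

variable {ι : Type*}

lemma orthant_subset_convexHull_natLattice [Finite ι] :
    {x : ι → ℝ | ∀ i, 0 ≤ x i} ⊆ convexHull ℝ {x : ι → ℝ | ∀ i, ∃ m : ℕ, x i = m} := by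
  have hpi : {x : ι → ℝ | ∀ i, ∃ m : ℕ, x i = m} =
      Set.univ.pi fun _ ↦ Set.range ((↑) : ℕ → ℝ) := by
    ext x; simp [eq_comm]
  rw [hpi, convexHull_pi]
  exact fun x hx i _ ↦ Ici_zero_subset_convexHull_range_natCast (hx i)

lemma convex_orthant_inter_halfSpace (K : Finset ι) (c : ℝ) :
    Convex ℝ {x : ι → ℝ | (∀ i, 0 ≤ x i) ∧ c ≤ ∑ i ∈ K, x i} := by
  have hsum : IsLinearMap ℝ fun x : ι → ℝ ↦ ∑ i ∈ K, x i :=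
    ⟨fun x y ↦ by simp [sum_add_distrib], fun a x ↦ by simp [mul_sum]⟩
  exact (convex_Ici (0 : ι → ℝ)).inter (convex_halfSpace_ge hsum c)

variable [DecidableEq ι]

lemma mem_convexHull_single_add_orthant (K : Finset ι) {c : ℝ} (hc : 0 < c) {x : ι → ℝ}
    (hx : ∀ i, 0 ≤ x i) (hxK : c ≤ ∑ i ∈ K, x i) :
    x ∈ convexHull ℝ ((fun i ↦ Pi.single i c) '' (K : Set ι)) + {v : ι → ℝ | ∀ i, 0 ≤ v i} := by
  set s := ∑ i ∈ K, x i
  have hs : 0 < s := hc.trans_le hxK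
  set y : ι → ℝ := ∑ i ∈ K, (x i / s) • Pi.single i c
  have hy : ∀ j, y j = if j ∈ K then x j / s * c else 0 := by
    intro j; simp [y, Finset.sum_apply, Pi.single_apply]
  refine ⟨y, ?_, x - y, fun j ↦ ?_, add_sub_cancel _ _⟩
  · refine (convex_convexHull ℝ _).sum_mem (fun i _ ↦ div_nonneg (hx i) hs.le) ?_
      fun i hi ↦ subset_convexHull ℝ _ ⟨i, hi, rfl⟩
    rw [← sum_div, div_self hs.ne']
  · rw [Pi.sub_apply, hy]
    split_ifs
    · have : x j / s * c ≤ x j := by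
        rw [div_mul_eq_mul_div, div_le_iff₀ hs]; exact mul_le_mul_of_nonneg_left hxK (hx j)
      linarith
    · simpa using hx j

lemma single_add_natLattice_subset (K : Finset ι) {r : ℤ} (hr : 0 ≤ r) :
    (fun i ↦ Pi.single i (r : ℝ)) '' (K : Set ι) + {x : ι → ℝ | ∀ i, ∃ m : ℕ, x i = m} ⊆
      {x | (∀ i, ∃ m : ℤ, x i = m) ∧ (∀ i, 0 ≤ x i) ∧ (r : ℝ) ≤ ∑ i ∈ K, x i} := by
  rintro _ ⟨_, ⟨i, hi, rfl⟩, v, hv, rfl⟩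
  dsimp only
  choose m hm using hv
  have hsingle (j : ι) : (Pi.single i (r : ℝ) : ι → ℝ) j = (if j = i then r else 0 : ℤ) := by
    rw [Pi.single_apply]; split_ifs <;> simp
  refine ⟨fun j ↦ ⟨(if j = i then r else 0) + m j, ?_⟩, fun j ↦ ?_, ?_⟩
  · rw [Pi.add_apply, hsingle, hm]; push_cast; rfl
  · simp only [Pi.add_apply, hsingle, hm]
    split_ifs <;> positivity
  · simp only [Pi.add_apply, sum_add_distrib]
    rw [sum_pi_single', if_pos (by exact_mod_cast hi), le_add_iff_nonneg_right]
    exact sum_nonneg fun j _ ↦ hm j ▸ Nat.cast_nonneg _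

end

theorem convexHull_latticePoints_orthant_halfspace_general
    (n k : ℕ) (r : ℤ) (hr : 0 < r) :
    convexHull ℝ {x : Fin n → ℝ |
        (∀ i, ∃ m : ℤ, x i = (m : ℝ)) ∧ (∀ i, 0 ≤ x i) ∧
        (r : ℝ) ≤ ∑ i ∈ Finset.univ.filter (fun i : Fin n => (i : ℕ) < k), x i}
      = {x : Fin n → ℝ | (∀ i, 0 ≤ x i) ∧
          (r : ℝ) ≤ ∑ i ∈ Finset.univ.filter (fun i : Fin n => (i : ℕ) < k), x i} := by
  set K := Finset.univ.filter fun i : Fin n ↦ (i : ℕ) < k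
  refine subset_antisymm
    (convexHull_min (fun x hx ↦ hx.2) (convex_orthant_inter_halfSpace K _)) ?_
  rintro x ⟨hx, hxK⟩
  obtain ⟨y, hy, v, hv, rfl⟩ := mem_convexHull_single_add_orthant K (by exact_mod_cast hr) hx hxK
  refine convexHull_mono (single_add_natLattice_subset K hr.le) ?_
  rw [convexHull_add]
  exact Set.add_mem_add hy (orthant_subset_convexHull_natLattice hv)

/-- For `1 ≤ k ≤ n` and a positive integer `r`, the convex hull in `ℝⁿ` of the
lattice points `{x ∈ ℤⁿ : x ≥ 0, x₁ + ⋯ + x_k ≥ r}` equals the polyhedron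
`{x ∈ ℝⁿ : x ≥ 0, x₁ + ⋯ + x_k ≥ r}`. -/
theorem convexHull_latticePoints_orthant_halfspace
    (n k : ℕ) (hn : 1 ≤ n) (hk1 : 1 ≤ k) (hkn : k ≤ n) (r : ℤ) (hr : 0 < r) :
    convexHull ℝ {x : Fin n → ℝ |
        (∀ i, ∃ m : ℤ, x i = (m : ℝ)) ∧ (∀ i, 0 ≤ x i) ∧
        (r : ℝ) ≤ ∑ i ∈ Finset.univ.filter (fun i : Fin n => (i : ℕ) < k), x i}
      = {x : Fin n → ℝ | (∀ i, 0 ≤ x i) ∧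
          (r : ℝ) ≤ ∑ i ∈ Finset.univ.filter (fun i : Fin n => (i : ℕ) < k), x i} :=
  convexHull_latticePoints_orthant_halfspace_general n k r hr
end

section
/- Let p be a positive integer, let C ⊆ ℝⁿ be a convex cone (a convex set closed under multiplication by nonnegative real scalars), and let B ⊆ C be an extreme subset of C (that is, whenever a point of B lies in the open segment between two points of C, both endpoints lie in B) satisfying p·B ⊆ B. Let S̃ = conv( (C ∖ B) ∩ ℤⁿ ) be the convex hull in ℝⁿ of the lattice points of C not lying in B. Then for every a ∈ ℤⁿ, if p·a ∈ S̃ then a ∈ S̃. (This is the lattice-point statement showing that the blow-up of a weakly normal affine toric scheme along its boundary is again Frobenius split by the standard splitting, the standard splitting acting as the multiplication by 1/p map on lattice points.) -/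
/-!
Since `B` is extreme in the convex set `C`, the set `C \ B` is convex, so the hull `S̃` lies in
`C \ B` and `p • a ∈ C \ B`. Scaling back by `p⁻¹` keeps `a` in the cone `C`, and `a ∉ B`
because `p • B ⊆ B`. Hence `a` is a lattice point of `C \ B`, one of the generators of `S̃`.
-/

section Cone

variable {𝕜 E : Type*} [Field 𝕜] [LinearOrder 𝕜] [IsStrictOrderedRing 𝕜]
  [AddCommGroup E] [Module 𝕜 E]

theorem mem_of_smul_mem_of_smul_closed {C : Set E} (hcone : ∀ c : 𝕜, 0 ≤ c → ∀ x ∈ C, c • x ∈ C)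
    {t : 𝕜} (ht : 0 < t) {x : E} (hx : t • x ∈ C) : x ∈ C := by
  simpa [smul_smul, inv_mul_cancel₀ ht.ne'] using hcone t⁻¹ (inv_nonneg.2 ht.le) _ hx

theorem mem_sdiff_of_smul_mem_sdiff {C B : Set E} (hcone : ∀ c : 𝕜, 0 ≤ c → ∀ x ∈ C, c • x ∈ C)
    {t : 𝕜} (ht : 0 < t) (htB : ∀ x ∈ B, t • x ∈ B) {x : E} (hx : t • x ∈ C \ B) :
    x ∈ C \ B :=
  ⟨mem_of_smul_mem_of_smul_closed hcone ht hx.1, fun hxB => hx.2 (htB x hxB)⟩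

end Cone

theorem IsExtreme.convexHull_sdiff_inter_subset {𝕜 E : Type*} [Semiring 𝕜] [PartialOrder 𝕜]
    [IsOrderedRing 𝕜] [AddCommGroup E] [Module 𝕜 E] {C B : Set E} (hC : Convex 𝕜 C)
    (hB : IsExtreme 𝕜 C B) (L : Set E) : convexHull 𝕜 ((C \ B) ∩ L) ⊆ C \ B :=
  convexHull_min Set.inter_subset_left (hB.convex_sdiff hC)

/-- Let `p` be a positive integer, `C ⊆ ℝⁿ` a convex cone and `B ⊆ C` an
extreme subset of `C` with `p • B ⊆ B`.  Let `S̃` be the convex hull of the lattice points of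
`C` not lying in `B`.  Then for every lattice point `a`, if `p • a ∈ S̃` then `a ∈ S̃`.
(The standard Frobenius splitting acts as multiplication by `1/p` on lattice points, so the
blow-up of a weakly normal affine toric scheme along its boundary is again Frobenius split.) -/
theorem mem_convexHull_of_smul_mem_convexHull
    (n p : ℕ) (hp : 0 < p) (C B : Set (Fin n → ℝ))
    (hC : Convex ℝ C)
    (hcone : ∀ (c : ℝ), 0 ≤ c → ∀ x ∈ C, c • x ∈ C)
    (hB : IsExtreme ℝ C B)
    (hpB : ∀ x ∈ B, (p : ℝ) • x ∈ B)
    (a : Fin n → ℤ)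
    (ha : (p : ℝ) • (fun i => (a i : ℝ)) ∈
      convexHull ℝ ((C \ B) ∩ {x : Fin n → ℝ | ∀ i, ∃ m : ℤ, x i = (m : ℝ)})) :
    (fun i => (a i : ℝ)) ∈
      convexHull ℝ ((C \ B) ∩ {x : Fin n → ℝ | ∀ i, ∃ m : ℤ, x i = (m : ℝ)}) := by
  have hpa := hB.convexHull_sdiff_inter_subset hC _ ha
  have haCB := mem_sdiff_of_smul_mem_sdiff hcone (Nat.cast_pos.2 hp) hpB hpa
  exact subset_convexHull ℝ _ ⟨haCB, fun i => ⟨a i, rfl⟩⟩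
end
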